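/- arXiv:1910.11001 — 7 statements merged into one kernel-verified Lean document; each statement's English description precedes it below -/
import Mathlib

section
/- The minimum cardinality of a hitting set of the triangles of Σ, the complement of the Schläfli graph, is exactly 10: Σ admits a hitting set of its triangles of cardinality 10, and every hitting set of the triangles of Σ has cardinality at least 10. -/
/-- The complement of the Schläfli graph: vertices are triples (tile, line, column);
tile 0 holds the vertices r^i_j, tile 1 the vertices s^i_j, tile 2 the vertices t^i_j
(indices shifted to start at 0). -/
def SchlafliC : SimpleGraph (Fin 3 × Fin 3 × Fin 3) where
  Adj x y :=
    (x.1 = y.1 ∧ x.2.1 ≠ y.2.1 ∧ x.2.2 ≠ y.2.2) ∨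
    (y.1 = x.1 + 1 ∧ x.2.2 = y.2.1) ∨
    (x.1 = y.1 + 1 ∧ y.2.2 = x.2.1)
  symm := by
    refine ⟨?_⟩
    rintro x y (⟨h1, h2, h3⟩ | ⟨h1, h2⟩ | ⟨h1, h2⟩)
    · exact Or.inl ⟨h1.symm, Ne.symm h2, Ne.symm h3⟩
    · exact Or.inr (Or.inr ⟨h1, h2⟩)
    · exact Or.inr (Or.inl ⟨h1, h2⟩)
  loopless := by
    refine ⟨?_⟩
    rintro x (⟨h1, h2, h3⟩ | ⟨h1, h2⟩ | ⟨h1, h2⟩)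
    · exact h2 rfl
    · exact absurd h1 (by simp [Fin.ext_iff])
    · exact absurd h1 (by simp [Fin.ext_iff])


/-!
Every vertex of `Σ` lies in exactly five triangles, so there are `27 * 5 / 3 = 45` triangles and
a hitting set `S` has at most `5 * #S` incidences with them: `#S ≥ 9`. If `#S = 9` this count is
tight, so `S` meets every triangle exactly once; as every edge lies in a triangle, `S` is
independent. An independent set meets each tile in cells pairwise sharing a row or a column, hence
in at most three cells, and in three only if they form a full row or column. A 9-element
independent set would therefore contain a full row or column of the middle tile, and the edges
between tiles then leave no room for it in the next or in the previous tile.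
-/

open Finset

namespace SimpleGraph

variable {V : Type*} (G : SimpleGraph V)

def HitsTriangles (S : Finset V) : Prop :=
  ∀ a b c, G.Adj a b → G.Adj a c → G.Adj b c → a ∈ S ∨ b ∈ S ∨ c ∈ S

variable {G} [DecidableEq V] {S : Finset V}

theorem HitsTriangles.inter_nonempty (hS : G.HitsTriangles S) {t : Finset V}
    (ht : G.IsNClique 3 t) : (S ∩ t).Nonempty := by
  obtain ⟨a, b, c, hab, hac, hbc, rfl⟩ := is3Clique_iff.1 ht
  rcases hS a b c hab hac hbc with h | h | h <;> exact ⟨_, mem_inter.2 ⟨h, by simp⟩⟩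

variable [Fintype V] [DecidableRel G.Adj]

instance : DecidablePred G.HitsTriangles := fun _ ↦ inferInstanceAs (Decidable (∀ _ _ _, _))

theorem card_filter_mem_cliqueFinset_three (v : V) :
    #{t ∈ G.cliqueFinset 3 | v ∈ t} =
      #(((G.neighborFinset v).powersetCard 2).filter
        fun e : Finset V ↦ G.IsClique (e : Set V)) := by
  refine card_nbij' (fun t ↦ t.erase v) (insert v) ?_ ?_ ?_ ?_
  · intro t ht
    simp only [coe_filter, mem_cliqueFinset_iff, Set.mem_ofPred_eq] at ht ⊢
    obtain ⟨ht, hv⟩ := ht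
    refine ⟨mem_powersetCard.2 ⟨fun w hw ↦ ?_, (ht.erase_of_mem hv).card_eq⟩,
      (ht.erase_of_mem hv).isClique⟩
    obtain ⟨hwv, hw⟩ := mem_erase.1 hw
    exact (mem_neighborFinset _ _ _).2 (ht.isClique hv hw hwv.symm)
  · intro e he
    simp only [coe_filter, mem_cliqueFinset_iff, Set.mem_ofPred_eq, mem_powersetCard] at he ⊢
    obtain ⟨⟨hsub, hcard⟩, he⟩ := he
    exact ⟨IsNClique.insert ⟨he, hcard⟩ fun w hw ↦ (mem_neighborFinset _ _ _).1 (hsub hw),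
      mem_insert_self _ _⟩
  · intro t ht
    exact insert_erase (mem_filter.1 ht).2
  · intro e he
    simp only [coe_filter, mem_powersetCard, Set.mem_ofPred_eq] at he
    exact erase_insert fun hv ↦ G.irrefl ((mem_neighborFinset _ _ _).1 (he.1.1 hv))

variable {d : ℕ}

theorem three_mul_card_cliqueFinset_three
    (hreg : ∀ v, #{t ∈ G.cliqueFinset 3 | v ∈ t} = d) :
    3 * #(G.cliqueFinset 3) = Fintype.card V * d := by
  rw [← sum_card hreg, mul_comm, ← smul_eq_mul, ← sum_const]
  exact sum_congr rfl fun t ht ↦ ((mem_cliqueFinset_iff.1 ht).card_eq).symm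

theorem HitsTriangles.card_cliqueFinset_three_le (hS : G.HitsTriangles S)
    (hreg : ∀ v, #{t ∈ G.cliqueFinset 3 | v ∈ t} = d) :
    #(G.cliqueFinset 3) ≤ #S * d := by
  rw [← sum_card_inter fun v _ ↦ hreg v, card_eq_sum_ones]
  exact sum_le_sum fun t ht ↦ (hS.inter_nonempty (mem_cliqueFinset_iff.1 ht)).card_pos

theorem HitsTriangles.card_le_three_mul_card (hS : G.HitsTriangles S) (hd : 0 < d)
    (hreg : ∀ v, #{t ∈ G.cliqueFinset 3 | v ∈ t} = d) :
    Fintype.card V ≤ 3 * #S := by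
  refine le_of_mul_le_mul_right ?_ hd
  rw [← three_mul_card_cliqueFinset_three hreg, mul_assoc]
  exact Nat.mul_le_mul_left 3 (hS.card_cliqueFinset_three_le hreg)

theorem HitsTriangles.isIndepSet_of_card_eq (hS : G.HitsTriangles S)
    (hreg : ∀ v, #{t ∈ G.cliqueFinset 3 | v ∈ t} = d)
    (hedge : ∀ u v, G.Adj u v → ∃ w, G.Adj u w ∧ G.Adj v w)
    (hcard : Fintype.card V = 3 * #S) : G.IsIndepSet S := by
  have hsum : ∑ t ∈ G.cliqueFinset 3, #(S ∩ t) = ∑ t ∈ G.cliqueFinset 3, 1 := by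
    rw [sum_card_inter fun v _ ↦ hreg v, ← card_eq_sum_ones]
    have := three_mul_card_cliqueFinset_three hreg
    rw [hcard] at this
    linarith
  have hone : ∀ t ∈ G.cliqueFinset 3, #(S ∩ t) = 1 := fun t ht ↦
    ((sum_eq_sum_iff_of_le fun t ht ↦
      (hS.inter_nonempty (mem_cliqueFinset_iff.1 ht)).card_pos).1 hsum.symm t ht).symm
  intro u hu v hv huv hadj
  obtain ⟨w, huw, hvw⟩ := hedge u v hadj
  have htri : {u, v, w} ∈ G.cliqueFinset 3 :=
    mem_cliqueFinset_iff.2 (is3Clique_triple_iff.2 ⟨hadj, huw, hvw⟩)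
  have : #{u, v} ≤ #(S ∩ {u, v, w}) :=
    card_le_card fun x hx ↦ by
      simp only [mem_insert, mem_singleton] at hx
      rcases hx with rfl | rfl <;> simp_all
  rw [card_pair huv, hone _ htri] at this
  omega

end SimpleGraph

theorem Finset.card_eq_sum_card_fiber_prodMk {α β : Type*} [Fintype α] [Fintype β]
    [DecidableEq α] [DecidableEq β] (S : Finset (α × β)) :
    #S = ∑ a, #{b | (a, b) ∈ S} := by
  simp_rw [card_filter]
  rw [← Fintype.sum_prod_type' (f := fun a b ↦ if (a, b) ∈ S then 1 else 0), ← card_filter]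
  simp

theorem card_le_three_of_forall_fst_eq_or_snd_eq :
    ∀ A : Finset (Fin 3 × Fin 3), (∀ p ∈ A, ∀ q ∈ A, p.1 = q.1 ∨ p.2 = q.2) → #A ≤ 3 := by
  decide +kernel

theorem image_snd_eq_univ_or_image_fst_eq_univ_of_forall_fst_eq_or_snd_eq :
    ∀ A : Finset (Fin 3 × Fin 3), (∀ p ∈ A, ∀ q ∈ A, p.1 = q.1 ∨ p.2 = q.2) → #A = 3 →
      A.image Prod.snd = univ ∨ A.image Prod.fst = univ := by
  decide +kernel

instance : DecidableRel SchlafliC.Adj := fun _ _ ↦ inferInstanceAs (Decidable (_ ∨ _ ∨ _))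

namespace SchlafliC

theorem card_filter_mem_cliqueFinset_three (v : Fin 3 × Fin 3 × Fin 3) :
    #{t ∈ SchlafliC.cliqueFinset 3 | v ∈ t} = 5 := by
  rw [SimpleGraph.card_filter_mem_cliqueFinset_three]
  revert v
  decide +kernel

theorem exists_common_neighbor :
    ∀ u v, SchlafliC.Adj u v → ∃ w, SchlafliC.Adj u w ∧ SchlafliC.Adj v w := by
  decide +kernel

theorem indepSetFree_nine : SchlafliC.IndepSetFree 9 := by
  rintro S ⟨hind, hcard⟩
  set A : Fin 3 → Finset (Fin 3 × Fin 3) := fun k ↦ {p | (k, p) ∈ S} with hA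
  have mem_A {k p} : p ∈ A k ↔ (k, p) ∈ S := by simp [hA]
  have collinear (k) : ∀ p ∈ A k, ∀ q ∈ A k, p.1 = q.1 ∨ p.2 = q.2 := by
    intro p hp q hq
    by_contra! h
    exact hind (mem_A.1 hp) (mem_A.1 hq) (ne_of_apply_ne (·.2.1) h.1) (Or.inl ⟨rfl, h⟩)
  have disjoint (k) : Disjoint ((A k).image Prod.snd) ((A (k + 1)).image Prod.fst) := by
    simp only [disjoint_left, mem_image, not_exists, not_and]
    rintro _ ⟨p, hp, rfl⟩ q hq hqp
    exact hind (mem_A.1 hp) (mem_A.1 hq) (by simp [Prod.ext_iff])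
      (Or.inr (Or.inl ⟨rfl, hqp.symm⟩))
  have card_A (k) : #(A k) = 3 := by
    have hsum : ∑ k, #(A k) = ∑ _k : Fin 3, 3 :=
      ((card_eq_sum_card_fiber_prodMk S).symm.trans hcard).trans (by simp)
    exact (sum_eq_sum_iff_of_le fun k _ ↦
      card_le_three_of_forall_fst_eq_or_snd_eq _ (collinear k)).1 hsum k (mem_univ k)
  have nonempty_image {f : Fin 3 × Fin 3 → Fin 3} (k) : ((A k).image f).Nonempty :=
    (card_pos.1 (by rw [card_A]; norm_num)).image f
  rcases image_snd_eq_univ_or_image_fst_eq_univ_of_forall_fst_eq_or_snd_eq _ (collinear 1)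
    (card_A 1) with h | h
  · obtain ⟨i, hi⟩ := nonempty_image 2 (f := Prod.fst)
    exact disjoint_left.1 (disjoint 1) (h ▸ mem_univ i) hi
  · obtain ⟨i, hi⟩ := nonempty_image 0 (f := Prod.snd)
    exact disjoint_right.1 (disjoint 0) (h ▸ mem_univ i) hi

/-- Row 0 of tile 0, column 0 of tile 1 and the block `{1, 2} × {1, 2}` of tile 2. Triangles
inside a tile are permutation diagonals, which meet every full line and every `2 × 2` block; a
triangle `(0, a, b), (1, b, c), (2, c, a)` avoiding the first two parts has `a, c ≠ 0`. -/
def triangleHittingSet : Finset (Fin 3 × Fin 3 × Fin 3) :=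
  {(0, 0, 0), (0, 0, 1), (0, 0, 2), (1, 0, 0), (1, 1, 0), (1, 2, 0),
    (2, 1, 1), (2, 1, 2), (2, 2, 1), (2, 2, 2)}

theorem hitsTriangles_triangleHittingSet : SchlafliC.HitsTriangles triangleHittingSet := by
  decide +kernel

end SchlafliC

/-- The minimum cardinality of a hitting set of the triangles of the complement of the
Schläfli graph is exactly 10. -/
theorem schlafli_min_hitting_set_card_eq_ten :
    (∃ S : Finset (Fin 3 × Fin 3 × Fin 3), S.card = 10 ∧
      ∀ a b c : Fin 3 × Fin 3 × Fin 3, SchlafliC.Adj a b → SchlafliC.Adj a c →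
        SchlafliC.Adj b c → (a ∈ S ∨ b ∈ S ∨ c ∈ S)) ∧
    (∀ S : Finset (Fin 3 × Fin 3 × Fin 3),
      (∀ a b c : Fin 3 × Fin 3 × Fin 3, SchlafliC.Adj a b → SchlafliC.Adj a c →
        SchlafliC.Adj b c → (a ∈ S ∨ b ∈ S ∨ c ∈ S)) → 10 ≤ S.card) := by
  refine ⟨⟨SchlafliC.triangleHittingSet, by decide, SchlafliC.hitsTriangles_triangleHittingSet⟩,
    fun S hS ↦ ?_⟩
  change SchlafliC.HitsTriangles S at hS
  have hreg := SchlafliC.card_filter_mem_cliqueFinset_three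
  have h27 : 27 ≤ 3 * #S := by simpa using hS.card_le_three_mul_card (by norm_num) hreg
  by_contra! hlt
  have hcard : #S = 9 := by omega
  exact SchlafliC.indepSetFree_nine S
    ⟨hS.isIndepSet_of_card_eq hreg SchlafliC.exists_common_neighbor (by simp [hcard]), hcard⟩
end

section
/- Let G be obtained from a graph H by multiplying a set X ⊆ V(H). If the subgraph of H induced by X is isomorphic to an induced subgraph of the 4-cycle C_4, and no two non-adjacent vertices of X have a common neighbour in V(H) \ X, then every hitting set of the triangles of H that is disjoint from X is also a hitting set of the triangles of G. -/
/-!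
A triangle of `G` with a vertex outside the multiplied set `X` projects onto a triangle of `H`:
a pair of its vertices inside `X` has a common neighbour outside `X`, so the pair is adjacent in `H`.
A triangle of `G` inside `X` cannot exist: on it, `φ`-equality would coincide with adjacency in `H`,
hence with adjacency in `C₄`; but three distinct vertices of `C₄` induce a path, and two equalities
force the third.
-/

/-- The 4-cycle C₄ on the vertices of ZMod 4. -/
def CycleFour : SimpleGraph (ZMod 4) := SimpleGraph.fromRel (fun u v => v = u + 1)

theorem CycleFour.induce_path_of_ne {a b c : ZMod 4} (hab : a ≠ b) (hac : a ≠ c) (hbc : b ≠ c) :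
    (CycleFour.Adj a b ∧ CycleFour.Adj a c ∧ ¬ CycleFour.Adj b c) ∨
    (CycleFour.Adj a b ∧ ¬ CycleFour.Adj a c ∧ CycleFour.Adj b c) ∨
    (¬ CycleFour.Adj a b ∧ CycleFour.Adj a c ∧ CycleFour.Adj b c) := by
  revert a b c
  simp only [CycleFour, SimpleGraph.fromRel_adj]
  decide

theorem CycleFour.not_eq_iff_adj_of_ne {α : Type*} {a b c : ZMod 4} (hab : a ≠ b) (hac : a ≠ c)
    (hbc : b ≠ c) (x y z : α) :
    ¬ ((x = y ↔ CycleFour.Adj a b) ∧ (x = z ↔ CycleFour.Adj a c) ∧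
      (y = z ↔ CycleFour.Adj b c)) := by
  rintro ⟨hxy, hxz, hyz⟩
  rcases CycleFour.induce_path_of_ne hab hac hbc with ⟨h₁, h₂, h₃⟩ | ⟨h₁, h₂, h₃⟩ | ⟨h₁, h₂, h₃⟩
  · exact h₃ (hyz.1 ((hxy.2 h₁).symm.trans (hxz.2 h₂)))
  · exact h₂ (hxz.1 ((hxy.2 h₁).trans (hyz.2 h₃)))
  · exact h₁ (hxy.1 ((hxz.2 h₂).trans (hyz.2 h₃).symm))

section Multiplication

variable {V W α : Type*} {H : SimpleGraph V} {X : Set V} {G : SimpleGraph W} {π : W → V}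
  {φ : W → α}

theorem ne_and_eq_iff_adj_of_adj_of_mem
    (hadj₂ : ∀ w w' : W, π w ∈ X → π w' ∈ X →
      (G.Adj w w' ↔ (π w ≠ π w' ∧
        ((H.Adj (π w) (π w') ∧ φ w = φ w') ∨
         (¬ H.Adj (π w) (π w') ∧ φ w ≠ φ w')))))
    {w w' : W} (hw : π w ∈ X) (hw' : π w' ∈ X) (h : G.Adj w w') :
    π w ≠ π w' ∧ (φ w = φ w' ↔ H.Adj (π w) (π w')) := by
  obtain ⟨hne, hlabel⟩ := (hadj₂ w w' hw hw').1 h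
  exact ⟨hne, by tauto⟩

theorem not_triangle_of_mem
    (hadj₂ : ∀ w w' : W, π w ∈ X → π w' ∈ X →
      (G.Adj w w' ↔ (π w ≠ π w' ∧
        ((H.Adj (π w) (π w') ∧ φ w = φ w') ∨
         (¬ H.Adj (π w) (π w') ∧ φ w ≠ φ w')))))
    (hC4 : ∃ g : V → ZMod 4, Set.InjOn g X ∧
      ∀ x ∈ X, ∀ y ∈ X, (H.Adj x y ↔ CycleFour.Adj (g x) (g y)))
    {p q r : W} (hp : π p ∈ X) (hq : π q ∈ X) (hr : π r ∈ X)
    (hpq : G.Adj p q) (hpr : G.Adj p r) (hqr : G.Adj q r) : False := by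
  obtain ⟨g, hg, hgadj⟩ := hC4
  obtain ⟨npq, epq⟩ := ne_and_eq_iff_adj_of_adj_of_mem hadj₂ hp hq hpq
  obtain ⟨npr, epr⟩ := ne_and_eq_iff_adj_of_adj_of_mem hadj₂ hp hr hpr
  obtain ⟨nqr, eqr⟩ := ne_and_eq_iff_adj_of_adj_of_mem hadj₂ hq hr hqr
  refine CycleFour.not_eq_iff_adj_of_ne (hg.ne hp hq npq) (hg.ne hp hr npr) (hg.ne hq hr nqr)
    (φ p) (φ q) (φ r) ⟨?_, ?_, ?_⟩
  · rw [epq, hgadj _ hp _ hq]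
  · rw [epr, hgadj _ hp _ hr]
  · rw [eqr, hgadj _ hq _ hr]

theorem adj_of_triangle_of_not_mem
    (hadj₁ : ∀ w w' : W, (π w ∉ X ∨ π w' ∉ X) →
      (G.Adj w w' ↔ H.Adj (π w) (π w')))
    (hadj₂ : ∀ w w' : W, π w ∈ X → π w' ∈ X →
      (G.Adj w w' ↔ (π w ≠ π w' ∧
        ((H.Adj (π w) (π w') ∧ φ w = φ w') ∨
         (¬ H.Adj (π w) (π w') ∧ φ w ≠ φ w')))))
    (hcn : ∀ x ∈ X, ∀ y ∈ X, x ≠ y → ¬ H.Adj x y →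
      ∀ v : V, v ∉ X → ¬ (H.Adj v x ∧ H.Adj v y))
    {w w' u : W} (hww' : G.Adj w w') (hwu : G.Adj w u) (hw'u : G.Adj w' u)
    (hout : π w ∉ X ∨ π w' ∉ X ∨ π u ∉ X) : H.Adj (π w) (π w') := by
  by_cases hin : π w ∈ X ∧ π w' ∈ X
  · obtain ⟨hw, hw'⟩ := hin
    have hu : π u ∉ X := by tauto
    by_contra hnadj
    exact hcn _ hw _ hw' (ne_and_eq_iff_adj_of_adj_of_mem hadj₂ hw hw' hww').1 hnadj _ hu
      ⟨((hadj₁ w u (Or.inr hu)).1 hwu).symm, ((hadj₁ w' u (Or.inr hu)).1 hw'u).symm⟩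
  · exact (hadj₁ w w' (by tauto)).1 hww'

end Multiplication

/-- `W` is the vertex set of the multiplied graph `G`: `π` sends each vertex of `A_x` to `x`
and every other vertex to itself, and `φ` is the labelling of the new vertices. -/
theorem multiplication_preserves_hitting_set_general {V W : Type*}
    (H : SimpleGraph V) (X : Set V)
    (G : SimpleGraph W) (π : W → V) (φ : W → ℤ)
    (hadj₁ : ∀ w w' : W, (π w ∉ X ∨ π w' ∉ X) →
      (G.Adj w w' ↔ H.Adj (π w) (π w')))
    (hadj₂ : ∀ w w' : W, π w ∈ X → π w' ∈ X →
      (G.Adj w w' ↔ (π w ≠ π w' ∧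
        ((H.Adj (π w) (π w') ∧ φ w = φ w') ∨
         (¬ H.Adj (π w) (π w') ∧ φ w ≠ φ w')))))
    (hC4 : ∃ g : V → ZMod 4, Set.InjOn g X ∧
      ∀ x ∈ X, ∀ y ∈ X, (H.Adj x y ↔ CycleFour.Adj (g x) (g y)))
    (hcn : ∀ x ∈ X, ∀ y ∈ X, x ≠ y → ¬ H.Adj x y →
      ∀ v : V, v ∉ X → ¬ (H.Adj v x ∧ H.Adj v y))
    (S : Set V)
    (hS : ∀ a b c : V, H.Adj a b → H.Adj a c → H.Adj b c → (a ∈ S ∨ b ∈ S ∨ c ∈ S)) :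
    ∀ p q r : W, G.Adj p q → G.Adj p r → G.Adj q r →
      (π p ∈ S ∨ π q ∈ S ∨ π r ∈ S) := by
  intro p q r hpq hpr hqr
  by_cases hin : π p ∈ X ∧ π q ∈ X ∧ π r ∈ X
  · exact (not_triangle_of_mem hadj₂ hC4 hin.1 hin.2.1 hin.2.2 hpq hpr hqr).elim
  exact hS _ _ _ (adj_of_triangle_of_not_mem hadj₁ hadj₂ hcn hpq hpr hqr (by tauto))
    (adj_of_triangle_of_not_mem hadj₁ hadj₂ hcn hpr hpq hqr.symm (by tauto))
    (adj_of_triangle_of_not_mem hadj₁ hadj₂ hcn hqr hpq.symm hpr.symm (by tauto))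

/-- Multiplication lemma: let G be obtained from H by multiplying X (encoded by the
projection π : W → V, where the fibre of π over x ∈ X is the set A_x of new vertices,
the fibre over any v ∉ X is a single vertex, and φ is the corresponding integer map,
injective on every fibre).  If H[X] is an induced subgraph of C₄ and no two distinct
non-adjacent vertices of X have a common neighbour outside X, then any hitting set S of
the triangles of H disjoint from X is also a hitting set of the triangles of G. -/
theorem multiplication_preserves_hitting_set {V W : Type*}
    (H : SimpleGraph V) (X : Set V)
    (G : SimpleGraph W) (π : W → V) (φ : W → ℤ)
    (hπ : ∀ v : V, v ∉ X → ∃! w : W, π w = v)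
    (hφ : ∀ w w' : W, π w = π w' → φ w = φ w' → w = w')
    (hadj₁ : ∀ w w' : W, (π w ∉ X ∨ π w' ∉ X) →
      (G.Adj w w' ↔ H.Adj (π w) (π w')))
    (hadj₂ : ∀ w w' : W, π w ∈ X → π w' ∈ X →
      (G.Adj w w' ↔ (π w ≠ π w' ∧
        ((H.Adj (π w) (π w') ∧ φ w = φ w') ∨
         (¬ H.Adj (π w) (π w') ∧ φ w ≠ φ w')))))
    (hC4 : ∃ g : V → ZMod 4, Set.InjOn g X ∧
      ∀ x ∈ X, ∀ y ∈ X, (H.Adj x y ↔ CycleFour.Adj (g x) (g y)))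
    (hcn : ∀ x ∈ X, ∀ y ∈ X, x ≠ y → ¬ H.Adj x y →
      ∀ v : V, v ∉ X → ¬ (H.Adj v x ∧ H.Adj v y))
    (S : Set V)
    (hS : ∀ a b c : V, H.Adj a b → H.Adj a c → H.Adj b c → (a ∈ S ∨ b ∈ S ∨ c ∈ S))
    (hSX : ∀ v ∈ S, v ∉ X) :
    ∀ p q r : W, G.Adj p q → G.Adj p r → G.Adj q r →
      (π p ∈ S ∨ π q ∈ S ∨ π r ∈ S) :=
  multiplication_preserves_hitting_set_general H X G π φ hadj₁ hadj₂ hC4 hcn S hS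
end

section
/- Let H be a prismatic graph with a leaf triangle {a,b,c} at c, and let G be obtained from H by exponentiating {a,b,c}. If G is prismatic and S is a hitting set of the triangles of H with c ∈ S and a, b ∉ S, then S is a hitting set of the triangles of G. -/
/-- A graph is prismatic if for every triangle, every vertex not in the triangle
has exactly one neighbour in the triangle. -/
def Prismatic {V : Type*} (G : SimpleGraph V) : Prop :=
  ∀ a b c v : V, G.Adj a b → G.Adj a c → G.Adj b c →
    v ≠ a → v ≠ b → v ≠ c → ∃! u, u ∈ ({a, b, c} : Set V) ∧ G.Adj v u

/-- `v` belongs to a triangle of `H` avoiding the vertex `c`. -/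
def InTriangleAvoiding {V : Type*} (H : SimpleGraph V) (c v : V) : Prop :=
  ∃ x y : V, H.Adj v x ∧ H.Adj v y ∧ H.Adj x y ∧ x ≠ c ∧ y ≠ c

/-- `v` belongs to no triangle of `H`. -/
def InNoTriangle {V : Type*} (H : SimpleGraph V) (v : V) : Prop :=
  ¬ ∃ x y : V, H.Adj v x ∧ H.Adj v y ∧ H.Adj x y

/-- Exponentiation lemma: let {a,b,c} be a leaf triangle at c of a prismatic graph H and
let G be obtained from H by exponentiating {a,b,c} (vertices: the vertices of H other
than a and b, together with the three stable sets A (type α), B (type β), C (type γ)).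
If G is prismatic and S is a hitting set of the triangles of H with c ∈ S and a,b ∉ S,
then (the copy of) S is a hitting set of the triangles of G. -/
theorem exponentiation_preserves_hitting_set {V α β γ : Type*}
    (H : SimpleGraph V) (a b c : V)
    (hab : H.Adj a b) (hac : H.Adj a c) (hbc : H.Adj b c)
    (hleaf : ∀ x y z : V, H.Adj x y → H.Adj x z → H.Adj y z →
      ({x, y, z} : Set V) ≠ {a, b, c} →
      a ∉ ({x, y, z} : Set V) ∧ b ∉ ({x, y, z} : Set V))
    (hH : Prismatic H)
    (G : SimpleGraph ({v : V // v ≠ a ∧ v ≠ b} ⊕ (α ⊕ (β ⊕ γ))))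
    (hG : Prismatic G)
    -- adjacency between old vertices
    (h_old : ∀ u v : {v : V // v ≠ a ∧ v ≠ b},
      G.Adj (Sum.inl u) (Sum.inl v) ↔ H.Adj u.1 v.1)
    -- old vertices and A, B, C
    (h_A : ∀ (u : {v : V // v ≠ a ∧ v ≠ b}) (x : α),
      G.Adj (Sum.inl u) (Sum.inr (Sum.inl x)) ↔ H.Adj u.1 a)
    (h_B : ∀ (u : {v : V // v ≠ a ∧ v ≠ b}) (y : β),
      G.Adj (Sum.inl u) (Sum.inr (Sum.inr (Sum.inl y))) ↔ H.Adj u.1 b)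
    (h_C : ∀ (u : {v : V // v ≠ a ∧ v ≠ b}) (z : γ),
      G.Adj (Sum.inl u) (Sum.inr (Sum.inr (Sum.inr z))) ↔
        (H.Adj c u.1 ∧ (InTriangleAvoiding H c u.1 ∨ InNoTriangle H u.1)))
    -- A, B and C are stable sets
    (h_Astable : ∀ x x' : α, ¬ G.Adj (Sum.inr (Sum.inl x)) (Sum.inr (Sum.inl x')))
    (h_Bstable : ∀ y y' : β,
      ¬ G.Adj (Sum.inr (Sum.inr (Sum.inl y))) (Sum.inr (Sum.inr (Sum.inl y'))))
    (h_Cstable : ∀ z z' : γ,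
      ¬ G.Adj (Sum.inr (Sum.inr (Sum.inr z))) (Sum.inr (Sum.inr (Sum.inr z'))))
    -- every vertex of A has at most one neighbour in B and vice versa
    (h_AB₁ : ∀ (x : α) (y y' : β),
      G.Adj (Sum.inr (Sum.inl x)) (Sum.inr (Sum.inr (Sum.inl y))) →
      G.Adj (Sum.inr (Sum.inl x)) (Sum.inr (Sum.inr (Sum.inl y'))) → y = y')
    (h_AB₂ : ∀ (y : β) (x x' : α),
      G.Adj (Sum.inr (Sum.inl x)) (Sum.inr (Sum.inr (Sum.inl y))) →
      G.Adj (Sum.inr (Sum.inl x')) (Sum.inr (Sum.inr (Sum.inl y))) → x = x')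
    -- every vertex of C is adjacent to exactly one end of every edge between A and B
    (h_CAB : ∀ (z : γ) (x : α) (y : β),
      G.Adj (Sum.inr (Sum.inl x)) (Sum.inr (Sum.inr (Sum.inl y))) →
      (G.Adj (Sum.inr (Sum.inr (Sum.inr z))) (Sum.inr (Sum.inl x)) ↔
        ¬ G.Adj (Sum.inr (Sum.inr (Sum.inr z))) (Sum.inr (Sum.inr (Sum.inl y)))))
    -- and adjacent to every vertex of A ∪ B with no neighbour in A ∪ B
    (h_CA : ∀ (z : γ) (x : α),
      (∀ y : β, ¬ G.Adj (Sum.inr (Sum.inl x)) (Sum.inr (Sum.inr (Sum.inl y)))) →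
      G.Adj (Sum.inr (Sum.inr (Sum.inr z))) (Sum.inr (Sum.inl x)))
    (h_CB : ∀ (z : γ) (y : β),
      (∀ x : α, ¬ G.Adj (Sum.inr (Sum.inl x)) (Sum.inr (Sum.inr (Sum.inl y)))) →
      G.Adj (Sum.inr (Sum.inr (Sum.inr z))) (Sum.inr (Sum.inr (Sum.inl y))))
    (S : Set V)
    (hS : ∀ x y z : V, H.Adj x y → H.Adj x z → H.Adj y z → (x ∈ S ∨ y ∈ S ∨ z ∈ S))
    (hcS : c ∈ S) (haS : a ∉ S) (hbS : b ∉ S) :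
    ∀ p q r : {v : V // v ≠ a ∧ v ≠ b} ⊕ (α ⊕ (β ⊕ γ)),
      G.Adj p q → G.Adj p r → G.Adj q r →
      ((∃ u, p = Sum.inl u ∧ u.1 ∈ S) ∨ (∃ u, q = Sum.inl u ∧ u.1 ∈ S) ∨
        (∃ u, r = Sum.inl u ∧ u.1 ∈ S)) := by

  -- helper lemmas
  have memabc : ∀ w x y : V, ({w, x, y} : Set V) = {a, b, c} → w ≠ a → w ≠ b → w = c := by
    intro w x y hset hwa hwb
    have hw : w ∈ ({a, b, c} : Set V) := hset ▸ Set.mem_insert _ _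
    rcases hw with h | h | h
    · exact absurd h hwa
    · exact absurd h hwb
    · exact h
  have noOOA : ∀ (u v : {v : V // v ≠ a ∧ v ≠ b}) (x : α),
      G.Adj (Sum.inl u) (Sum.inl v) → G.Adj (Sum.inl u) (Sum.inr (Sum.inl x)) →
      G.Adj (Sum.inl v) (Sum.inr (Sum.inl x)) → False := by
    intro u v x h1 h2 h3
    have huv := (h_old u v).mp h1
    have hua := (h_A u x).mp h2
    have hva := (h_A v x).mp h3
    by_cases hset : ({u.1, v.1, a} : Set V) = {a, b, c}
    · have hu := memabc u.1 v.1 a hset u.2.1 u.2.2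
      have hv : v.1 = c := by
        have hv' : v.1 ∈ ({a, b, c} : Set V) := hset ▸ (by right; left; rfl)
        rcases hv' with h | h | h
        · exact absurd h v.2.1
        · exact absurd h v.2.2
        · exact h
      rw [hu, hv] at huv
      exact H.irrefl huv
    · exact (hleaf u.1 v.1 a huv hua hva hset).1 (by right; right; rfl)
  have noOOB : ∀ (u v : {v : V // v ≠ a ∧ v ≠ b}) (y : β),
      G.Adj (Sum.inl u) (Sum.inl v) → G.Adj (Sum.inl u) (Sum.inr (Sum.inr (Sum.inl y))) →
      G.Adj (Sum.inl v) (Sum.inr (Sum.inr (Sum.inl y))) → False := by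
    intro u v y h1 h2 h3
    have huv := (h_old u v).mp h1
    have hub := (h_B u y).mp h2
    have hvb := (h_B v y).mp h3
    by_cases hset : ({u.1, v.1, b} : Set V) = {a, b, c}
    · have hu := memabc u.1 v.1 b hset u.2.1 u.2.2
      have hv : v.1 = c := by
        have hv' : v.1 ∈ ({a, b, c} : Set V) := hset ▸ (by right; left; rfl)
        rcases hv' with h | h | h
        · exact absurd h v.2.1
        · exact absurd h v.2.2
        · exact h
      rw [hu, hv] at huv
      exact H.irrefl huv
    · exact (hleaf u.1 v.1 b huv hub hvb hset).2 (by right; right; rfl)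
  have noOOC : ∀ (u v : {v : V // v ≠ a ∧ v ≠ b}) (z : γ),
      G.Adj (Sum.inl u) (Sum.inl v) → G.Adj (Sum.inl u) (Sum.inr (Sum.inr (Sum.inr z))) →
      G.Adj (Sum.inl v) (Sum.inr (Sum.inr (Sum.inr z))) → False := by
    intro u v z h1 h2 h3
    have hcu := ((h_C u z).mp h2).1
    have hcv := ((h_C v z).mp h3).1
    set cv : {v : V // v ≠ a ∧ v ≠ b} := ⟨c, hac.ne', hbc.ne'⟩ with hcv_def
    have ne1 : (Sum.inl cv : {v : V // v ≠ a ∧ v ≠ b} ⊕ (α ⊕ (β ⊕ γ))) ≠ Sum.inl u := by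
      intro h
      exact hcu.ne (congrArg Subtype.val (Sum.inl_injective h))
    have ne2 : (Sum.inl cv : {v : V // v ≠ a ∧ v ≠ b} ⊕ (α ⊕ (β ⊕ γ))) ≠ Sum.inl v := by
      intro h
      exact hcv.ne (congrArg Subtype.val (Sum.inl_injective h))
    have ne3 : (Sum.inl cv : {v : V // v ≠ a ∧ v ≠ b} ⊕ (α ⊕ (β ⊕ γ)))
        ≠ Sum.inr (Sum.inr (Sum.inr z)) := Sum.inl_ne_inr
    obtain ⟨w, -, huniq⟩ := hG (Sum.inl u) (Sum.inl v) (Sum.inr (Sum.inr (Sum.inr z)))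
      (Sum.inl cv) h1 h2 h3 ne1 ne2 ne3
    have e1 := huniq (Sum.inl u) ⟨Set.mem_insert _ _, (h_old cv u).mpr hcu⟩
    have e2 := huniq (Sum.inl v) ⟨by right; left; rfl, (h_old cv v).mpr hcv⟩
    exact h1.ne (e1.trans e2.symm)
  have noOAC : ∀ (u : {v : V // v ≠ a ∧ v ≠ b}) (x : α) (z : γ),
      G.Adj (Sum.inl u) (Sum.inr (Sum.inl x)) →
      G.Adj (Sum.inl u) (Sum.inr (Sum.inr (Sum.inr z))) → False := by
    intro u x z h1 h2
    have hua := (h_A u x).mp h1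
    have hcu := ((h_C u z).mp h2).1
    by_cases hset : ({u.1, a, c} : Set V) = {a, b, c}
    · exact hcu.ne' (memabc u.1 a c hset u.2.1 u.2.2)
    · exact (hleaf u.1 a c hua hcu.symm hac hset).1 (by right; left; rfl)
  have noOBC : ∀ (u : {v : V // v ≠ a ∧ v ≠ b}) (y : β) (z : γ),
      G.Adj (Sum.inl u) (Sum.inr (Sum.inr (Sum.inl y))) →
      G.Adj (Sum.inl u) (Sum.inr (Sum.inr (Sum.inr z))) → False := by
    intro u y z h1 h2
    have hub := (h_B u y).mp h1
    have hcu := ((h_C u z).mp h2).1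
    by_cases hset : ({u.1, b, c} : Set V) = {a, b, c}
    · exact hcu.ne' (memabc u.1 b c hset u.2.1 u.2.2)
    · exact (hleaf u.1 b c hub hcu.symm hbc hset).2 (by right; left; rfl)
  have noABC : ∀ (x : α) (y : β) (z : γ),
      G.Adj (Sum.inr (Sum.inl x)) (Sum.inr (Sum.inr (Sum.inl y))) →
      G.Adj (Sum.inr (Sum.inl x)) (Sum.inr (Sum.inr (Sum.inr z))) →
      G.Adj (Sum.inr (Sum.inr (Sum.inl y))) (Sum.inr (Sum.inr (Sum.inr z))) → False := by
    intro x y z h1 h2 h3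
    exact (h_CAB z x y h1).mp h2.symm h3.symm
  have oab : ∀ (u : {v : V // v ≠ a ∧ v ≠ b}) (x : α) (y : β),
      G.Adj (Sum.inl u) (Sum.inr (Sum.inl x)) →
      G.Adj (Sum.inl u) (Sum.inr (Sum.inr (Sum.inl y))) → u.1 ∈ S := by
    intro u x y h1 h2
    have hua := (h_A u x).mp h1
    have hub := (h_B u y).mp h2
    by_cases hset : ({u.1, a, b} : Set V) = {a, b, c}
    · have := memabc u.1 a b hset u.2.1 u.2.2
      rw [this]; exact hcS
    · exact absurd (by right; left; rfl) (hleaf u.1 a b hua hub hab hset).1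
  intro p q r hpq hpr hqr
  rcases p with u | x | y | z <;> rcases q with u' | x' | y' | z' <;>
    rcases r with u'' | x'' | y'' | z''
  all_goals first
    | exact absurd hpq (h_Astable _ _)
    | exact absurd hpr (h_Astable _ _)
    | exact absurd hqr (h_Astable _ _)
    | exact absurd hpq (h_Bstable _ _)
    | exact absurd hpr (h_Bstable _ _)
    | exact absurd hqr (h_Bstable _ _)
    | exact absurd hpq (h_Cstable _ _)
    | exact absurd hpr (h_Cstable _ _)
    | exact absurd hqr (h_Cstable _ _)
    | exact (hS _ _ _ ((h_old _ _).mp hpq) ((h_old _ _).mp hpr) ((h_old _ _).mp hqr)).imp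
        (fun h => ⟨_, rfl, h⟩) (Or.imp (fun h => ⟨_, rfl, h⟩) (fun h => ⟨_, rfl, h⟩))
    | exact (noOOA _ _ _ hpq hpr hqr).elim
    | exact (noOOA _ _ _ hpr hpq hqr.symm).elim
    | exact (noOOA _ _ _ hqr hpq.symm hpr.symm).elim
    | exact (noOOB _ _ _ hpq hpr hqr).elim
    | exact (noOOB _ _ _ hpr hpq hqr.symm).elim
    | exact (noOOB _ _ _ hqr hpq.symm hpr.symm).elim
    | exact (noOOC _ _ _ hpq hpr hqr).elim
    | exact (noOOC _ _ _ hpr hpq hqr.symm).elim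
    | exact (noOOC _ _ _ hqr hpq.symm hpr.symm).elim
    | exact (noOAC _ _ _ hpq hpr).elim
    | exact (noOAC _ _ _ hpr hpq).elim
    | exact (noOAC _ _ _ hpq.symm hqr).elim
    | exact (noOAC _ _ _ hqr hpq.symm).elim
    | exact (noOAC _ _ _ hpr.symm hqr.symm).elim
    | exact (noOAC _ _ _ hqr.symm hpr.symm).elim
    | exact (noOBC _ _ _ hpq hpr).elim
    | exact (noOBC _ _ _ hpr hpq).elim
    | exact (noOBC _ _ _ hpq.symm hqr).elim
    | exact (noOBC _ _ _ hqr hpq.symm).elim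
    | exact (noOBC _ _ _ hpr.symm hqr.symm).elim
    | exact (noOBC _ _ _ hqr.symm hpr.symm).elim
    | exact (noABC _ _ _ hpq hpr hqr).elim
    | exact (noABC _ _ _ hpr hpq hqr.symm).elim
    | exact (noABC _ _ _ hpq.symm hqr hpr).elim
    | exact (noABC _ _ _ hqr hpq.symm hpr.symm).elim
    | exact (noABC _ _ _ hpr.symm hqr.symm hpq).elim
    | exact (noABC _ _ _ hqr.symm hpr.symm hpq.symm).elim
    | exact Or.inl ⟨_, rfl, oab _ _ _ hpq hpr⟩
    | exact Or.inl ⟨_, rfl, oab _ _ _ hpr hpq⟩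
    | exact Or.inr (Or.inl ⟨_, rfl, oab _ _ _ hpq.symm hqr⟩)
    | exact Or.inr (Or.inl ⟨_, rfl, oab _ _ _ hqr hpq.symm⟩)
    | exact Or.inr (Or.inr ⟨_, rfl, oab _ _ _ hpr.symm hqr.symm⟩)
    | exact Or.inr (Or.inr ⟨_, rfl, oab _ _ _ hqr.symm hpr.symm⟩)
end

section
/- Every prismatic graph of skew-square type admits a hitting set of its triangles of cardinality at most 5. -/
/-- One-directional adjacency specification for graphs of skew-square type.
Labels (values of π): 0 ↦ a (class A), 1 ↦ b (class B), 2 ↦ c (class C),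
3 ↦ s, 4 ↦ t, 5 ↦ d₁, 6 ↦ d₂, 7 ↦ d₃.  x and y are the φ-values. -/
def SkewAdjOne (p q : Fin 8) (x y : ℤ) : Prop :=
  (p = 0 ∧ q = 2 ∧ x = y) ∨                -- A–C (a and c adjacent in K)
  (p = 1 ∧ q = 2 ∧ x = y) ∨                -- B–C (b and c adjacent in K)
  (p = 0 ∧ q = 1 ∧ x ≠ y) ∨                -- A–B (a and b non-adjacent in K)
  (p = 3 ∧ (q = 0 ∨ q = 2)) ∨              -- s–A and s–C
  (p = 4 ∧ (q = 1 ∨ q = 2)) ∨              -- t–B and t–C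
  ((p = 5 ∨ p = 6 ∨ p = 7) ∧ (q = 0 ∨ q = 1) ∧
    1 ≤ y ∧ y ≤ 3 ∧ y ≠ (p.val : ℤ) - 4) ∨ -- dᵢ–(A ∪ B)
  ((p = 5 ∨ p = 6 ∨ p = 7) ∧ q = 2 ∧
    ¬ (1 ≤ y ∧ y ≤ 3 ∧ y ≠ (p.val : ℤ) - 4)) -- dᵢ–C

/-- Every prismatic graph of skew-square type admits a hitting set of its triangles of
cardinality at most 5.  The graph G is encoded by a projection π : W → Fin 8 (labels as
in `SkewAdjOne`) and an integer map φ; the fibres over 3,…,7 (the vertices s, t, d₁, d₂,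
d₃) are singletons, φ is injective on each fibre, and adjacency is given by the
symmetrized specification `SkewAdjOne`. -/
theorem skew_square_hitting_card_le_five {W : Type*}
    (G : SimpleGraph W) (π : W → Fin 8) (φ : W → ℤ)
    (hπ : ∀ v : Fin 8, (v = 3 ∨ v = 4 ∨ v = 5 ∨ v = 6 ∨ v = 7) → ∃! w : W, π w = v)
    (hφ : ∀ w w' : W, π w = π w' → φ w = φ w' → w = w')
    (hadj : ∀ w w' : W, G.Adj w w' ↔
      (SkewAdjOne (π w) (π w') (φ w) (φ w') ∨ SkewAdjOne (π w') (π w) (φ w') (φ w)))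
    (hG : Prismatic G) :
    ∃ S : Finset W, S.card ≤ 5 ∧
      ∀ p q r : W, G.Adj p q → G.Adj p r → G.Adj q r →
        (p ∈ S ∨ q ∈ S ∨ r ∈ S) := by
  classical
  obtain ⟨ws, hws, hwsu⟩ := hπ 3 (Or.inl rfl)
  obtain ⟨wt, hwt, hwtu⟩ := hπ 4 (Or.inr (Or.inl rfl))
  obtain ⟨w5, hw5, hw5u⟩ := hπ 5 (Or.inr (Or.inr (Or.inl rfl)))
  obtain ⟨w6, hw6, hw6u⟩ := hπ 6 (Or.inr (Or.inr (Or.inr (Or.inl rfl))))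
  obtain ⟨w7, hw7, hw7u⟩ := hπ 7 (Or.inr (Or.inr (Or.inr (Or.inr rfl))))
  refine ⟨{ws, wt, w5, w6, w7}, ?_, ?_⟩
  · have h1 := Finset.card_insert_le ws ({wt, w5, w6, w7} : Finset W)
    have h2 := Finset.card_insert_le wt ({w5, w6, w7} : Finset W)
    have h3 := Finset.card_insert_le w5 ({w6, w7} : Finset W)
    have h4 := Finset.card_insert_le w6 ({w7} : Finset W)
    have h5 : ({w7} : Finset W).card = 1 := Finset.card_singleton w7
    simp only [Finset.insert_eq] at *
    omega
  · intro p q r hpq hpr hqr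
    by_contra hcon
    push_neg at hcon
    obtain ⟨hp, hq, hr⟩ := hcon
    have fin8 : ∀ x : Fin 8, x = 0 ∨ x = 1 ∨ x = 2 ∨ x = 3 ∨ x = 4 ∨ x = 5 ∨ x = 6 ∨ x = 7 := by
      decide
    have hlab : ∀ w : W, w ∉ ({ws, wt, w5, w6, w7} : Finset W) →
        π w = 0 ∨ π w = 1 ∨ π w = 2 := by
      intro w hw
      rcases fin8 (π w) with h|h|h|h|h|h|h|h
      · exact Or.inl h
      · exact Or.inr (Or.inl h)
      · exact Or.inr (Or.inr h)
      · exact absurd (by simp [hwsu w h]) hw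
      · exact absurd (by simp [hwtu w h]) hw
      · exact absurd (by simp [hw5u w h]) hw
      · exact absurd (by simp [hw6u w h]) hw
      · exact absurd (by simp [hw7u w h]) hw
    have ha := hlab p hp
    have hb := hlab q hq
    have hc := hlab r hr
    rw [hadj] at hpq hpr hqr
    rcases ha with ha|ha|ha <;> rcases hb with hb|hb|hb <;> rcases hc with hc|hc|hc <;>
      simp only [SkewAdjOne, ha, hb, hc] at hpq hpr hqr <;>
      simp only [show ((0:Fin 8) = 1) = False from by decide,
        show ((0:Fin 8) = 2) = False from by decide,
        show ((1:Fin 8) = 0) = False from by decide,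
        show ((1:Fin 8) = 2) = False from by decide,
        show ((2:Fin 8) = 0) = False from by decide,
        show ((2:Fin 8) = 1) = False from by decide,
        show ((0:Fin 8) = 3) = False from by decide,
        show ((1:Fin 8) = 3) = False from by decide,
        show ((2:Fin 8) = 3) = False from by decide,
        show ((0:Fin 8) = 4) = False from by decide,
        show ((1:Fin 8) = 4) = False from by decide,
        show ((2:Fin 8) = 4) = False from by decide,
        show ((0:Fin 8) = 5) = False from by decide,
        show ((1:Fin 8) = 5) = False from by decide,
        show ((2:Fin 8) = 5) = False from by decide,
        show ((0:Fin 8) = 6) = False from by decide,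
        show ((1:Fin 8) = 6) = False from by decide,
        show ((2:Fin 8) = 6) = False from by decide,
        show ((0:Fin 8) = 7) = False from by decide,
        show ((1:Fin 8) = 7) = False from by decide,
        show ((2:Fin 8) = 7) = False from by decide,
        and_true, true_and, and_false, false_and, or_false, false_or,
        eq_self_iff_true, not_true, not_false_iff] at hpq hpr hqr <;>
      omega
end

section
/- Every prismatic graph in the class F_8 admits a hitting set of its triangles of cardinality at most 3; indeed {v_1, v_2, v_3} is such a hitting set. -/
/-- The rotator: the graph H of the class F₈ on nine vertices (0-based: vᵢ is i-1).
{0,1,2} is a triangle, {3,4,5} is complete to {6,7,8}, and i is adjacent to i+3 and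
i+6 for i = 0,1,2. -/
def RotatorF8 : SimpleGraph (Fin 9) where
  Adj u v := u ≠ v ∧
    ((u.val < 3 ∧ v.val < 3) ∨
     (3 ≤ u.val ∧ u.val < 6 ∧ 6 ≤ v.val) ∨ (3 ≤ v.val ∧ v.val < 6 ∧ 6 ≤ u.val) ∨
     (u.val < 3 ∧ (v.val = u.val + 3 ∨ v.val = u.val + 6)) ∨
     (v.val < 3 ∧ (u.val = v.val + 3 ∨ u.val = v.val + 6)))
  symm := ⟨by
    rintro u v ⟨h1, h2⟩
    exact ⟨h1.symm, by tauto⟩⟩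
  loopless := ⟨fun u h => h.1 rfl⟩

/-- p and q form one of the multiplied pairs {3,6}, {4,7}, {5,8}
(that is, {v₄,v₇}, {v₅,v₈}, {v₆,v₉} in the 1-based notation). -/
def F8SamePair (p q : Fin 9) : Prop :=
  3 ≤ p.val ∧ 3 ≤ q.val ∧ (q.val = p.val + 3 ∨ p.val = q.val + 3)

/-!
Outside the triangle `{v₁, v₂, v₃}`, every edge of a graph in `F₈` joins a copy of a vertex of
`{v₄, v₅, v₆}` to a copy of a vertex of `{v₇, v₈, v₉}`: edges inherited from the rotator do so
because `{v₄, v₅, v₆}` and `{v₇, v₈, v₉}` are stable, and the edges created by multiplying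
`{vᵢ, vᵢ₊₃}` do so by construction. So the graph minus the copies of `v₁, v₂, v₃` is bipartite,
and every triangle meets those (at most three) copies.
-/

theorem SimpleGraph.triangle_meets_of_bipartite_off {W : Type*} (G : SimpleGraph W) (S : Set W)
    (side : W → Prop) (hside : ∀ a b, a ∉ S → b ∉ S → G.Adj a b → (side a ↔ ¬ side b))
    (p q r : W) (hpq : G.Adj p q) (hpr : G.Adj p r) (hqr : G.Adj q r) :
    p ∈ S ∨ q ∈ S ∨ r ∈ S := by
  by_contra! h
  obtain ⟨hp, hq, hr⟩ := h
  have := hside p q hp hq hpq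
  have := hside p r hp hr hpr
  have := hside q r hq hr hqr
  tauto

theorem Finset.exists_card_le_mem_iff_of_existsUnique {W α : Type*} (f : W → α) (T : Finset α)
    (hT : ∀ a ∈ T, ∃! w, f w = a) :
    ∃ S : Finset W, S.card ≤ T.card ∧ ∀ w, w ∈ S ↔ f w ∈ T := by
  classical
  choose g hg hg_unique using hT
  refine ⟨T.attach.image fun a => g a.1 a.2, card_image_le.trans card_attach.le, fun w => ?_⟩
  simp only [mem_image, mem_attach, true_and, Subtype.exists]
  constructor
  · rintro ⟨a, ha, rfl⟩
    rwa [hg]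
  · intro hw
    exact ⟨f w, hw, (hg_unique _ hw w rfl).symm⟩

theorem RotatorF8.lt_six_iff_not_of_adj {u v : Fin 9} (hu : 3 ≤ u.val) (hv : 3 ≤ v.val)
    (huv : RotatorF8.Adj u v) : u.val < 6 ↔ ¬ v.val < 6 := by
  obtain ⟨-, h⟩ := huv
  omega

theorem F8SamePair.lt_six_iff_not {u v : Fin 9} (huv : F8SamePair u v) :
    u.val < 6 ↔ ¬ v.val < 6 := by
  obtain ⟨hu, hv, h⟩ := huv
  omega

/-- `G` is encoded by the projection `π` onto the rotator (fibres over `0, 1, 2` are singletons)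
and by `φ`, which collects the integer labels of the three multiplications. -/
theorem class_F8_hitting_card_le_three_general {W : Type*}
    (G : SimpleGraph W) (π : W → Fin 9) (φ : W → ℤ)
    (hπ : ∀ v : Fin 9, v.val < 3 → ∃! w : W, π w = v)
    (hadj : ∀ w w' : W, G.Adj w w' ↔ (π w ≠ π w' ∧
      ((F8SamePair (π w) (π w') ∧ φ w = φ w') ∨
       (¬ F8SamePair (π w) (π w') ∧ RotatorF8.Adj (π w) (π w'))))) :
    ∃ S : Finset W, S.card ≤ 3 ∧
      (∀ w : W, w ∈ S ↔ (π w).val < 3) ∧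
      ∀ p q r : W, G.Adj p q → G.Adj p r → G.Adj q r →
        (p ∈ S ∨ q ∈ S ∨ r ∈ S) := by
  obtain ⟨S, hcard, hS⟩ := Finset.exists_card_le_mem_iff_of_existsUnique π
    (Finset.univ.filter fun v : Fin 9 => v.val < 3) (fun v hv => hπ v (Finset.mem_filter.1 hv).2)
  simp only [Finset.mem_filter, Finset.mem_univ, true_and] at hS
  refine ⟨S, hcard.trans (by decide), hS, G.triangle_meets_of_bipartite_off S
    (fun w => (π w).val < 6) fun a b ha hb hab => ?_⟩
  rw [Finset.mem_coe, hS, not_lt] at ha hb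
  rcases ((hadj a b).1 hab).2 with ⟨hpair, -⟩ | ⟨-, hrot⟩
  · exact hpair.lt_six_iff_not
  · exact RotatorF8.lt_six_iff_not_of_adj ha hb hrot

/-- Every prismatic graph in the class F₈ admits a hitting set of its triangles of
cardinality at most 3; indeed the copy of {v₁,v₂,v₃} = {0,1,2} is such a hitting set.
G is obtained from the rotator by successively multiplying {3,6}, {4,7} and {5,8};
it is encoded by the projection π : W → Fin 9 (fibres over 0,1,2 are singletons) and
the integer maps collected into φ : new vertices over a multiplied pair are adjacent
iff their φ-values agree, and all other adjacencies are inherited from the rotator. -/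
theorem class_F8_hitting_card_le_three {W : Type*}
    (G : SimpleGraph W) (π : W → Fin 9) (φ : W → ℤ)
    (hπ : ∀ v : Fin 9, v.val < 3 → ∃! w : W, π w = v)
    (hφ : ∀ w w' : W, π w = π w' → φ w = φ w' → w = w')
    (hadj : ∀ w w' : W, G.Adj w w' ↔ (π w ≠ π w' ∧
      ((F8SamePair (π w) (π w') ∧ φ w = φ w') ∨
       (¬ F8SamePair (π w) (π w') ∧ RotatorF8.Adj (π w) (π w')))))
    (hG : Prismatic G) :
    ∃ S : Finset W, S.card ≤ 3 ∧
      (∀ w : W, w ∈ S ↔ (π w).val < 3) ∧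
      ∀ p q r : W, G.Adj p q → G.Adj p r → G.Adj q r →
        (p ∈ S ∨ q ∈ S ∨ r ∈ S) :=
  class_F8_hitting_card_le_three_general G π φ hπ hadj
end

section
/- Let G be an orientable prismatic graph. Then every connected component of the derived graph D(G) is either claw-free (contains no induced subgraph isomorphic to K_{1,3}) or isomorphic to the complete bipartite graph K_{3,3}. -/
/-- A prismatic graph is orientable if one can choose a cyclic permutation of every
triangle, compatibly on every pair of vertex-disjoint triangles joined by a perfect
matching. -/
def Orientable {V : Type*} [DecidableEq V] (G : SimpleGraph V) : Prop :=
  ∃ O : Finset V → V → V,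
    (∀ a b c : V, G.Adj a b → G.Adj a c → G.Adj b c →
      O {a, b, c} a ∈ ({a, b, c} : Finset V) ∧ O {a, b, c} a ≠ a ∧
        O {a, b, c} (O {a, b, c} a) ≠ a) ∧
    (∀ s₁ s₂ s₃ t₁ t₂ t₃ : V,
      G.Adj s₁ s₂ → G.Adj s₁ s₃ → G.Adj s₂ s₃ →
      G.Adj t₁ t₂ → G.Adj t₁ t₃ → G.Adj t₂ t₃ →
      Disjoint ({s₁, s₂, s₃} : Finset V) ({t₁, t₂, t₃} : Finset V) →
      G.Adj s₁ t₁ → G.Adj s₂ t₂ → G.Adj s₃ t₃ →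
      (O {s₁, s₂, s₃} s₁ = s₂ ↔ O {t₁, t₂, t₃} t₁ = t₂))

/-- The claw K_{1,3}: vertex 0 is adjacent to vertices 1, 2, 3. -/
def Claw : SimpleGraph (Fin 4) where
  Adj u v := (u = 0 ∧ v ≠ 0) ∨ (v = 0 ∧ u ≠ 0)
  symm := by tauto
  loopless := ⟨by rintro u (⟨h1, h2⟩ | ⟨h1, h2⟩) <;> exact h2 h1⟩

/-- The derived graph of G: the intersection graph of the triangles of G. -/
def DerivedGraph {V : Type*} [DecidableEq V] (G : SimpleGraph V) :
    SimpleGraph {T : Finset V // G.IsNClique 3 T} where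
  Adj T T' := T ≠ T' ∧ (T.1 ∩ T'.1).Nonempty
  symm := ⟨by
    rintro T T' ⟨h1, h2⟩
    exact ⟨h1.symm, by rwa [Finset.inter_comm]⟩⟩
  loopless := ⟨fun T h => h.1 rfl⟩

/-!
A claw of `D(G)` is a triangle `T` together with three pairwise disjoint triangles
`S₁, S₂, S₃` meeting it. In a prismatic graph the edges between two disjoint triangles form a
perfect matching. Among three pairwise disjoint triangles, the matching between two of them and
the composite of their matchings with the third agree at one vertex, hence differ at most by a
transposition, and a transposition would reverse an orientation. So `S₁, S₂, S₃` are the rows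
of a `3 × 3` grid (a copy of `K₃ □ K₃`) whose first column is `T`. A triangle through a grid
vertex is its row or its column: otherwise its two other vertices would be matched to two rows
along different diagonals, and the same orientation argument fails. Hence the component of `T`
consists of the three rows and the three columns, and two of them meet exactly when one is a
row and the other a column.
-/
open Finset SimpleGraph

theorem exists_eq_insert_pair_of_card_eq_three {α : Type*} [DecidableEq α] {s : Finset α}
    (hs : #s = 3) {a : α} (ha : a ∈ s) : ∃ b c, s = {a, b, c} := by
  obtain ⟨b, c, -, hbc⟩ := card_eq_two.1 (by rw [card_erase_of_mem ha, hs] : #(s.erase a) = 2)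
  exact ⟨b, c, by rw [← hbc, insert_erase ha]⟩

theorem completeBipartiteGraph_preconnected {α β : Type*} [Nonempty α] [Nonempty β] :
    (completeBipartiteGraph α β).Preconnected := by
  obtain ⟨a⟩ := ‹Nonempty α›
  obtain ⟨b⟩ := ‹Nonempty β›
  have h : ∀ x, (completeBipartiteGraph α β).Reachable x (.inl a) := by
    rintro (a' | b')
    · exact SimpleGraph.Adj.reachable (G := completeBipartiteGraph α β) (v := .inr b)
        (by simp) |>.trans (SimpleGraph.Adj.reachable (by simp))
    · exact SimpleGraph.Adj.reachable (by simp)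
  exact fun x y => (h x).trans (h y).symm

section

variable {V : Type*} {G : SimpleGraph V}

theorem SimpleGraph.ConnectedComponent.supp_eq_range_of_embedding {W : Type*}
    {H : SimpleGraph W} (hH : H.Preconnected) (f : H ↪g G)
    (hf : ∀ w v, G.Adj (f w) v → v ∈ Set.range f) (C : G.ConnectedComponent) {w : W}
    (hw : f w ∈ C.supp) : C.supp = Set.range f := by
  ext v
  constructor
  · intro hv
    have hreach := (SimpleGraph.reachable_iff_reflTransGen _ _).1 (C.reachable_of_mem_supp hw hv)
    clear hv
    induction hreach with
    | refl => exact ⟨w, rfl⟩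
    | tail _ hadj ih =>
      obtain ⟨u, rfl⟩ := ih
      exact hf u _ hadj
  · rintro ⟨u, rfl⟩
    exact (ConnectedComponent.sound ((hH w u).map f.toHom)).symm.trans hw

theorem SimpleGraph.ConnectedComponent.nonempty_induce_supp_iso {W : Type*}
    {H : SimpleGraph W} (hH : H.Preconnected) (f : H ↪g G)
    (hf : ∀ w v, G.Adj (f w) v → v ∈ Set.range f) (C : G.ConnectedComponent) {w : W}
    (hw : f w ∈ C.supp) : Nonempty (G.induce C.supp ≃g H) := by
  rw [C.supp_eq_range_of_embedding hH f hf hw]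
  exact ⟨f.isoInduceRange.symm⟩

/-- The vertices `g i j` span a copy of the rook's graph `K₃ □ K₃`: rows and columns are
triangles, and in a prismatic graph there are no further edges (`IsGrid.not_adj`). -/
structure IsGrid (G : SimpleGraph V) (g : Fin 3 → Fin 3 → V) : Prop where
  injective : Function.Injective (Function.uncurry g)
  adj_row (i : Fin 3) {j j' : Fin 3} : j ≠ j' → G.Adj (g i j) (g i j')
  adj_col {i i' : Fin 3} (j : Fin 3) : i ≠ i' → G.Adj (g i j) (g i' j)

namespace IsGrid

variable {g : Fin 3 → Fin 3 → V}

theorem eq_iff (hg : IsGrid G g) {i j i' j' : Fin 3} : g i j = g i' j' ↔ i = i' ∧ j = j' :=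
  ⟨fun h => Prod.ext_iff.1 (hg.injective (a₁ := (i, j)) (a₂ := (i', j')) h),
    by rintro ⟨rfl, rfl⟩; rfl⟩

theorem transpose (hg : IsGrid G g) : IsGrid G fun i j => g j i where
  injective := hg.injective.comp Prod.swap_injective
  adj_row j _ _ h := hg.adj_col j h
  adj_col i h := hg.adj_row i h

theorem reindex (hg : IsGrid G g) (σ τ : Equiv.Perm (Fin 3)) :
    IsGrid G fun i j => g (σ i) (τ j) where
  injective := hg.injective.comp (σ.injective.prodMap τ.injective)
  adj_row _ _ _ h := hg.adj_row _ (τ.injective.ne h)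
  adj_col _ h := hg.adj_col _ (σ.injective.ne h)

end IsGrid

variable [DecidableEq V]

namespace Prismatic

theorem existsUnique_adj (hG : Prismatic G) {s : Finset V} (hs : G.IsNClique 3 s) {v : V}
    (hv : v ∉ s) : ∃! u, u ∈ s ∧ G.Adj v u := by
  obtain ⟨a, b, c, hab, hac, hbc, rfl⟩ := is3Clique_iff.1 hs
  simp only [mem_insert, mem_singleton, not_or] at hv
  simpa using hG a b c v hab hac hbc hv.1 hv.2.1 hv.2.2

theorem exists_adj (hG : Prismatic G) {s : Finset V} (hs : G.IsNClique 3 s) {v : V}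
    (hv : v ∉ s) : ∃ u ∈ s, G.Adj v u :=
  (hG.existsUnique_adj hs hv).exists

theorem eq_of_adj_of_adj (hG : Prismatic G) {s : Finset V} (hs : G.IsNClique 3 s) {v a b : V}
    (hv : v ∉ s) (ha : a ∈ s) (hb : b ∈ s) (hva : G.Adj v a) (hvb : G.Adj v b) : a = b :=
  (hG.existsUnique_adj hs hv).unique ⟨ha, hva⟩ ⟨hb, hvb⟩

theorem eq_of_mem_of_mem (hG : Prismatic G) {s t : Finset V} (hs : G.IsNClique 3 s)
    (ht : G.IsNClique 3 t) {a b : V} (hab : a ≠ b) (has : a ∈ s) (hbs : b ∈ s) (hat : a ∈ t)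
    (hbt : b ∈ t) : s = t := by
  refine (eq_of_subset_of_card_le (fun c hct => ?_) (by rw [hs.card_eq, ht.card_eq])).symm
  by_contra hcs
  have hca : c ≠ a := fun h => hcs (h ▸ has)
  have hcb : c ≠ b := fun h => hcs (h ▸ hbs)
  exact hab (hG.eq_of_adj_of_adj hs hcs has hbs (ht.1 hct hat hca) (ht.1 hct hbt hcb))

theorem adj_of_adj_of_adj (hG : Prismatic G) {a₁ a₂ a₃ b₁ b₂ b₃ : V}
    (hA : G.IsNClique 3 {a₁, a₂, a₃}) (hB : G.IsNClique 3 {b₁, b₂, b₃})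
    (hAB : Disjoint ({a₁, a₂, a₃} : Finset V) {b₁, b₂, b₃}) (h₁ : G.Adj a₁ b₁)
    (h₂ : G.Adj a₂ b₂) : G.Adj a₃ b₃ := by
  obtain ⟨-, ha₁₃, ha₂₃⟩ := is3Clique_triple_iff.1 hA
  obtain ⟨u, hu, h₃⟩ := hG.exists_adj (v := a₃) hB (disjoint_left.1 hAB (by simp))
  simp only [mem_insert, mem_singleton] at hu
  rcases hu with hu | hu | hu <;> subst u
  · exact absurd (hG.eq_of_adj_of_adj (v := b₁) hA (disjoint_right.1 hAB (by simp)) (by simp)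
      (by simp) h₁.symm h₃.symm) ha₁₃.ne
  · exact absurd (hG.eq_of_adj_of_adj (v := b₂) hA (disjoint_right.1 hAB (by simp)) (by simp)
      (by simp) h₂.symm h₃.symm) ha₂₃.ne
  · exact h₃

theorem exists_matching (hG : Prismatic G) {a₁ a₂ a₃ b₁ : V} {B : Finset V}
    (hA : G.IsNClique 3 {a₁, a₂, a₃}) (hB : G.IsNClique 3 B)
    (hAB : Disjoint ({a₁, a₂, a₃} : Finset V) B) (hb₁ : b₁ ∈ B) (h₁ : G.Adj a₁ b₁) :
    ∃ b₂ b₃, B = {b₁, b₂, b₃} ∧ G.Adj a₂ b₂ ∧ G.Adj a₃ b₃ := by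
  obtain ⟨ha₁₂, -, -⟩ := is3Clique_triple_iff.1 hA
  obtain ⟨c, d, rfl⟩ := exists_eq_insert_pair_of_card_eq_three hB.card_eq hb₁
  obtain ⟨u, hu, h₂⟩ := hG.exists_adj (v := a₂) hB (disjoint_left.1 hAB (by simp))
  simp only [mem_insert, mem_singleton] at hu
  rcases hu with hu | hu | hu <;> subst u
  · exact absurd (hG.eq_of_adj_of_adj (v := b₁) hA (disjoint_right.1 hAB (by simp)) (by simp)
      (by simp) h₁.symm h₂.symm) ha₁₂.ne
  · exact ⟨c, d, rfl, h₂, hG.adj_of_adj_of_adj hA hB hAB h₁ h₂⟩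
  · rw [pair_comm c d] at hB hAB ⊢
    exact ⟨d, c, rfl, h₂, hG.adj_of_adj_of_adj hA hB hAB h₁ h₂⟩

end Prismatic

theorem Orientable.adj_of_matchings (hor : Orientable G) (hG : Prismatic G)
    {a₁ a₂ a₃ b₁ b₂ b₃ c₁ c₂ c₃ : V} (hA : G.IsNClique 3 {a₁, a₂, a₃})
    (hB : G.IsNClique 3 {b₁, b₂, b₃}) (hC : G.IsNClique 3 {c₁, c₂, c₃})
    (hAB : Disjoint ({a₁, a₂, a₃} : Finset V) {b₁, b₂, b₃})
    (hAC : Disjoint ({a₁, a₂, a₃} : Finset V) {c₁, c₂, c₃})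
    (hBC : Disjoint ({b₁, b₂, b₃} : Finset V) {c₁, c₂, c₃})
    (hab₁ : G.Adj a₁ b₁) (hab₂ : G.Adj a₂ b₂) (hab₃ : G.Adj a₃ b₃)
    (hac₁ : G.Adj a₁ c₁) (hac₂ : G.Adj a₂ c₂) (hac₃ : G.Adj a₃ c₃) (hbc₁ : G.Adj b₁ c₁) :
    G.Adj b₂ c₂ := by
  obtain ⟨hb₁₂, hb₁₃, hb₂₃⟩ := is3Clique_triple_iff.1 hB
  obtain ⟨hc₁₂, hc₁₃, hc₂₃⟩ := is3Clique_triple_iff.1 hC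
  obtain ⟨u, hu, hb₂u⟩ := hG.exists_adj (v := b₂) hC (disjoint_left.1 hBC (by simp))
  simp only [mem_insert, mem_singleton] at hu
  rcases hu with hu | hu | hu <;> subst u
  · exact absurd (hG.eq_of_adj_of_adj (v := c₁) hB (disjoint_right.1 hBC (by simp)) (by simp)
      (by simp) hbc₁.symm hb₂u.symm) hb₁₂.ne
  · exact hb₂u
  -- otherwise the matching from B to C would be an odd permutation of the composite through A
  have hswap : ({c₁, c₃, c₂} : Finset V) = {c₁, c₂, c₃} := by rw [pair_comm]
  have hb₃c₂ : G.Adj b₃ c₂ :=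
    hG.adj_of_adj_of_adj hB (hswap ▸ hC) (hswap ▸ hBC) hbc₁ hb₂u
  obtain ⟨ha₁₂, ha₁₃, ha₂₃⟩ := is3Clique_triple_iff.1 hA
  obtain ⟨O, hO, hcompat⟩ := hor
  have hOAB := hcompat _ _ _ _ _ _ ha₁₂ ha₁₃ ha₂₃ hb₁₂ hb₁₃ hb₂₃ hAB hab₁ hab₂ hab₃
  have hOAC := hcompat _ _ _ _ _ _ ha₁₂ ha₁₃ ha₂₃ hc₁₂ hc₁₃ hc₂₃ hAC hac₁ hac₂ hac₃
  have hOBC := hcompat _ _ _ _ _ _ hb₁₂ hb₁₃ hb₂₃ hc₁₃ hc₁₂ hc₂₃.symm (hswap ▸ hBC)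
    hbc₁ hb₂u hb₃c₂
  rw [hswap] at hOBC
  have hO₃ : O {c₁, c₂, c₃} c₁ = c₂ ↔ O {c₁, c₂, c₃} c₁ = c₃ := hOAC.symm.trans (hOAB.trans hOBC)
  obtain ⟨hmem, hne, -⟩ := hO c₁ c₂ c₃ hc₁₂ hc₁₃ hc₂₃
  simp only [mem_insert, mem_singleton] at hmem
  rcases hmem with h | h | h
  · exact absurd h hne
  · exact absurd (h.symm.trans (hO₃.1 h)) hc₂₃.ne
  · exact absurd ((hO₃.2 h).symm.trans h) hc₂₃.ne

def gridRow (g : Fin 3 → Fin 3 → V) (i : Fin 3) : Finset V := univ.image (g i)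

def gridCol (g : Fin 3 → Fin 3 → V) (j : Fin 3) : Finset V := univ.image fun i => g i j

variable {g : Fin 3 → Fin 3 → V}

theorem mem_gridRow {i : Fin 3} {v : V} : v ∈ gridRow g i ↔ ∃ j, g i j = v := by
  simp [gridRow]

theorem mem_gridCol {j : Fin 3} {v : V} : v ∈ gridCol g j ↔ ∃ i, g i j = v := by
  simp [gridCol]

theorem gridRow_eq (g : Fin 3 → Fin 3 → V) (i : Fin 3) :
    gridRow g i = {g i 0, g i 1, g i 2} := by
  ext v
  simp [mem_gridRow, Fin.exists_fin_succ, eq_comm]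

theorem gridCol_eq (g : Fin 3 → Fin 3 → V) (j : Fin 3) :
    gridCol g j = {g 0 j, g 1 j, g 2 j} :=
  gridRow_eq (fun i j => g j i) j

theorem gridRow_reindex (g : Fin 3 → Fin 3 → V) (σ τ : Equiv.Perm (Fin 3)) (i : Fin 3) :
    gridRow (fun i j => g (σ i) (τ j)) i = gridRow g (σ i) := by
  ext v
  simp only [mem_gridRow]
  exact (τ.surjective.exists (p := fun j => g (σ i) j = v)).symm

theorem gridCol_reindex (g : Fin 3 → Fin 3 → V) (σ τ : Equiv.Perm (Fin 3)) (j : Fin 3) :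
    gridCol (fun i j => g (σ i) (τ j)) j = gridCol g (τ j) := by
  ext v
  simp only [mem_gridCol]
  exact (σ.surjective.exists (p := fun i => g i (τ j) = v)).symm

theorem gridRow_inter_gridCol_nonempty (i j : Fin 3) : (gridRow g i ∩ gridCol g j).Nonempty :=
  ⟨g i j, mem_inter.2 ⟨mem_gridRow.2 ⟨j, rfl⟩, mem_gridCol.2 ⟨i, rfl⟩⟩⟩

namespace IsGrid

theorem apply_mem_gridRow_iff (hg : IsGrid G g) {i j i' : Fin 3} :
    g i j ∈ gridRow g i' ↔ i = i' := by
  simp [mem_gridRow, hg.eq_iff, eq_comm]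

theorem disjoint_gridRow (hg : IsGrid G g) {i i' : Fin 3} (h : i ≠ i') :
    Disjoint (gridRow g i) (gridRow g i') := by
  refine disjoint_left.2 fun v hv => ?_
  obtain ⟨j, rfl⟩ := mem_gridRow.1 hv
  exact hg.apply_mem_gridRow_iff.not.2 h

theorem apply_mem_gridCol_iff (hg : IsGrid G g) {i j j' : Fin 3} :
    g i j ∈ gridCol g j' ↔ j = j' :=
  hg.transpose.apply_mem_gridRow_iff

theorem isNClique_gridRow (hg : IsGrid G g) (i : Fin 3) : G.IsNClique 3 (gridRow g i) := by
  rw [gridRow_eq]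
  exact is3Clique_triple_iff.2
    ⟨hg.adj_row i (by decide), hg.adj_row i (by decide), hg.adj_row i (by decide)⟩

theorem isNClique_gridCol (hg : IsGrid G g) (j : Fin 3) : G.IsNClique 3 (gridCol g j) :=
  hg.transpose.isNClique_gridRow j

theorem not_adj (hg : IsGrid G g) (hG : Prismatic G) {i j i' j' : Fin 3} (hi : i ≠ i')
    (hj : j ≠ j') : ¬ G.Adj (g i j) (g i' j') := fun h =>
  hj (hg.eq_iff.1 (hG.eq_of_adj_of_adj (hg.isNClique_gridRow i')
    (hg.apply_mem_gridRow_iff.not.2 hi) (mem_gridRow.2 ⟨j, rfl⟩) (mem_gridRow.2 ⟨j', rfl⟩)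
    (hg.adj_col j hi) h)).2


theorem disjoint_triple_gridRow (hg : IsGrid G g) {q r : V} (hq : ∀ i j, g i j ≠ q)
    (hr : ∀ i j, g i j ≠ r) {i : Fin 3} (hi : i ≠ 0) :
    Disjoint ({g 0 0, q, r} : Finset V) (gridRow g i) := by
  refine disjoint_right.2 fun v hv => ?_
  obtain ⟨j, rfl⟩ := mem_gridRow.1 hv
  simp [hg.eq_iff, hi, hq, hr]

/-- The two off-grid vertices of such a triangle would be matched to rows 1 and 2 along
different diagonals; composing these matchings would join `g 1 1` to `g 2 2`. -/
theorem not_adj_diag_of_isNClique (hg : IsGrid G g) (hG : Prismatic G) (hor : Orientable G)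
    {q r : V} (hs : G.IsNClique 3 {g 0 0, q, r}) (hq : ∀ i j, g i j ≠ q)
    (hr : ∀ i j, g i j ≠ r) : ¬ G.Adj q (g 1 1) := by
  intro hq₁₁
  obtain ⟨h₀q, -, -⟩ := is3Clique_triple_iff.1 hs
  have hrow₂ : ({g 2 0, g 2 2, g 2 1} : Finset V) = gridRow g 2 := by
    rw [gridRow_eq, pair_comm]
  have hB : G.IsNClique 3 {g 1 0, g 1 1, g 1 2} := gridRow_eq g 1 ▸ hg.isNClique_gridRow 1
  have hC : G.IsNClique 3 {g 2 0, g 2 2, g 2 1} := hrow₂ ▸ hg.isNClique_gridRow 2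
  have hAB : Disjoint ({g 0 0, q, r} : Finset V) {g 1 0, g 1 1, g 1 2} :=
    gridRow_eq g 1 ▸ hg.disjoint_triple_gridRow hq hr (by decide)
  have hAC : Disjoint ({g 0 0, q, r} : Finset V) {g 2 0, g 2 2, g 2 1} :=
    hrow₂ ▸ hg.disjoint_triple_gridRow hq hr (by decide)
  have hr₁₂ : G.Adj r (g 1 2) := hG.adj_of_adj_of_adj hs hB hAB (hg.adj_col 0 (by decide)) hq₁₁
  have hq₂₂ : G.Adj q (g 2 2) := by
    obtain ⟨u, hu, hqu⟩ := hG.exists_adj (v := q) hC (disjoint_left.1 hAC (by simp))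
    simp only [mem_insert, mem_singleton] at hu
    rcases hu with rfl | rfl | rfl
    · exact absurd (hG.eq_of_adj_of_adj hs (disjoint_right.1 hAC (by simp)) (by simp) (by simp)
        (hg.adj_col 0 (by decide)) hqu.symm) h₀q.ne
    · exact hqu
    · exact absurd (hg.eq_iff.1 (hG.eq_of_adj_of_adj (hg.isNClique_gridCol 1)
        (by simp [mem_gridCol, hq]) (mem_gridCol.2 ⟨1, rfl⟩) (mem_gridCol.2 ⟨2, rfl⟩)
        hq₁₁ hqu)).1 (by decide)
  have hr₂₁ : G.Adj r (g 2 1) := hG.adj_of_adj_of_adj hs hC hAC (hg.adj_col 0 (by decide)) hq₂₂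
  refine hg.not_adj hG (i := 1) (j := 1) (i' := 2) (j' := 2) (by decide) (by decide) ?_
  exact hor.adj_of_matchings hG hs hB hC hAB hAC
    (gridRow_eq g 1 ▸ hrow₂ ▸ hg.disjoint_gridRow (by decide))
    (hg.adj_col 0 (by decide)) hq₁₁ hr₁₂ (hg.adj_col 0 (by decide)) hq₂₂ hr₂₁
    (hg.adj_col 0 (by decide))

theorem false_of_isNClique (hg : IsGrid G g) (hG : Prismatic G) (hor : Orientable G)
    {q r : V} (hs : G.IsNClique 3 {g 0 0, q, r}) (hq : ∀ i j, g i j ≠ q)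
    (hr : ∀ i j, g i j ≠ r) : False := by
  obtain ⟨h₀q, -, -⟩ := is3Clique_triple_iff.1 hs
  have hrow₁ : ({g 1 0, g 1 2, g 1 1} : Finset V) = gridRow g 1 := by
    rw [gridRow_eq, pair_comm]
  obtain ⟨u, hu, hqu⟩ := hG.exists_adj (v := q) (hg.isNClique_gridRow 1)
    (by simp [mem_gridRow, hq])
  rw [← hrow₁] at hu
  simp only [mem_insert, mem_singleton] at hu
  rcases hu with rfl | rfl | rfl
  · exact h₀q.ne (hG.eq_of_adj_of_adj hs (disjoint_right.1 (hg.disjoint_triple_gridRow hq hr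
      (i := 1) (by decide)) (mem_gridRow.2 ⟨0, rfl⟩)) (by simp) (by simp)
      (hg.adj_col 0 (by decide)) hqu.symm)
  · have hr₁₁ : G.Adj r (g 1 1) :=
      hG.adj_of_adj_of_adj hs (hrow₁ ▸ hg.isNClique_gridRow 1)
        (hrow₁ ▸ hg.disjoint_triple_gridRow hq hr (by decide)) (hg.adj_col 0 (by decide)) hqu
    rw [pair_comm] at hs
    exact hg.not_adj_diag_of_isNClique hG hor hs hr hq hr₁₁
  · exact hg.not_adj_diag_of_isNClique hG hor hs hq hr hqu

theorem eq_gridRow_or_eq_gridCol_of_zero_mem (hg : IsGrid G g) (hG : Prismatic G)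
    (hor : Orientable G) {s : Finset V} (hs : G.IsNClique 3 s) (h₀ : g 0 0 ∈ s) :
    s = gridRow g 0 ∨ s = gridCol g 0 := by
  by_cases hgrid : ∃ i j, g i j ∈ s ∧ g i j ≠ g 0 0
  · obtain ⟨i, j, hij, hne⟩ := hgrid
    obtain rfl | hi := eq_or_ne i 0
    · exact .inl (hG.eq_of_mem_of_mem hs (hg.isNClique_gridRow 0) hne.symm h₀ hij
        (mem_gridRow.2 ⟨0, rfl⟩) (mem_gridRow.2 ⟨j, rfl⟩))
    obtain rfl : j = 0 := by
      by_contra hj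
      exact hg.not_adj hG hi.symm (Ne.symm hj) (hs.1 h₀ hij hne.symm)
    exact .inr (hG.eq_of_mem_of_mem hs (hg.isNClique_gridCol 0) hne.symm h₀ hij
      (mem_gridCol.2 ⟨0, rfl⟩) (mem_gridCol.2 ⟨i, rfl⟩))
  push Not at hgrid
  obtain ⟨q, r, rfl⟩ := exists_eq_insert_pair_of_card_eq_three hs.card_eq h₀
  obtain ⟨h₀q, h₀r, -⟩ := is3Clique_triple_iff.1 hs
  exact (hg.false_of_isNClique hG hor hs
    (fun i j h => h₀q.ne ((hgrid i j (by simp [h])).symm.trans h))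
    (fun i j h => h₀r.ne ((hgrid i j (by simp [h])).symm.trans h))).elim

theorem eq_gridRow_or_eq_gridCol (hg : IsGrid G g) (hG : Prismatic G) (hor : Orientable G)
    {s : Finset V} (hs : G.IsNClique 3 s) {i j : Fin 3} (h : g i j ∈ s) :
    s = gridRow g i ∨ s = gridCol g j := by
  have := (hg.reindex (Equiv.swap 0 i) (Equiv.swap 0 j)).eq_gridRow_or_eq_gridCol_of_zero_mem
    hG hor hs (by simpa using h)
  simpa [gridRow_reindex, gridCol_reindex] using this

def triangle (hg : IsGrid G g) : Fin 3 ⊕ Fin 3 → {T : Finset V // G.IsNClique 3 T} :=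
  Sum.elim (fun i => ⟨gridRow g i, hg.isNClique_gridRow i⟩)
    (fun j => ⟨gridCol g j, hg.isNClique_gridCol j⟩)

theorem gridRow_inter_gridRow_nonempty_iff (hg : IsGrid G g) {i i' : Fin 3} :
    (gridRow g i ∩ gridRow g i').Nonempty ↔ i = i' := by
  refine ⟨fun ⟨v, hv⟩ => ?_, fun h => ⟨g i 0, by simp [h, mem_gridRow]⟩⟩
  rw [mem_inter] at hv
  obtain ⟨j, rfl⟩ := mem_gridRow.1 hv.1
  exact hg.apply_mem_gridRow_iff.1 hv.2

theorem gridCol_inter_gridCol_nonempty_iff (hg : IsGrid G g) {j j' : Fin 3} :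
    (gridCol g j ∩ gridCol g j').Nonempty ↔ j = j' :=
  hg.transpose.gridRow_inter_gridRow_nonempty_iff

theorem gridRow_ne_gridCol (hg : IsGrid G g) (i j : Fin 3) : gridRow g i ≠ gridCol g j := by
  intro h
  obtain ⟨j', hj'⟩ := exists_ne j
  exact hj' (hg.apply_mem_gridCol_iff.1 (h ▸ mem_gridRow.2 ⟨j', rfl⟩))

theorem triangle_inter_nonempty_iff (hg : IsGrid G g) {x y : Fin 3 ⊕ Fin 3} :
    ((hg.triangle x).1 ∩ (hg.triangle y).1).Nonempty ↔
      x = y ∨ (completeBipartiteGraph (Fin 3) (Fin 3)).Adj x y := by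
  rcases x with i | j <;> rcases y with i' | j'
  · simpa [triangle] using hg.gridRow_inter_gridRow_nonempty_iff
  · simpa [triangle] using gridRow_inter_gridCol_nonempty i j'
  · simpa [triangle, inter_comm] using gridRow_inter_gridCol_nonempty i' j
  · simpa [triangle] using hg.gridCol_inter_gridCol_nonempty_iff

theorem gridRow_injective (hg : IsGrid G g) : Function.Injective (gridRow g) :=
  fun _ _ h => hg.apply_mem_gridRow_iff.1 (h ▸ mem_gridRow.2 ⟨0, rfl⟩)

theorem triangle_injective (hg : IsGrid G g) : Function.Injective hg.triangle := by
  rintro (i | j) (i' | j') h <;> have h' := congrArg Subtype.val h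
  · exact congrArg _ (hg.gridRow_injective h')
  · exact absurd h' (hg.gridRow_ne_gridCol i j')
  · exact absurd h'.symm (hg.gridRow_ne_gridCol i' j)
  · exact congrArg _ (hg.transpose.gridRow_injective h')

def derivedGraphEmbedding (hg : IsGrid G g) :
    completeBipartiteGraph (Fin 3) (Fin 3) ↪g DerivedGraph G where
  toFun := hg.triangle
  inj' := hg.triangle_injective
  map_rel_iff' {x y} := by
    change hg.triangle x ≠ hg.triangle y ∧ ((hg.triangle x).1 ∩ (hg.triangle y).1).Nonempty ↔ _
    rw [hg.triangle_inter_nonempty_iff, hg.triangle_injective.ne_iff]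
    constructor
    · rintro ⟨hne, rfl | h⟩
      exacts [absurd rfl hne, h]
    · exact fun h => ⟨h.ne, .inr h⟩

theorem mem_range_triangle_of_adj (hg : IsGrid G g) (hG : Prismatic G) (hor : Orientable G)
    {x : Fin 3 ⊕ Fin 3} {U : {T : Finset V // G.IsNClique 3 T}}
    (h : (DerivedGraph G).Adj (hg.triangle x) U) : U ∈ Set.range hg.triangle := by
  obtain ⟨-, v, hv⟩ := h
  rw [mem_inter] at hv
  have key : ∀ i j, g i j ∈ U.1 → U ∈ Set.range hg.triangle := fun i j hij =>
    (hg.eq_gridRow_or_eq_gridCol hG hor U.2 hij).elim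
      (fun h => ⟨.inl i, Subtype.ext h.symm⟩) (fun h => ⟨.inr j, Subtype.ext h.symm⟩)
  rcases x with i | j
  · obtain ⟨j, rfl⟩ := mem_gridRow.1 hv.1
    exact key i j hv.2
  · obtain ⟨i, rfl⟩ := mem_gridCol.1 hv.1
    exact key i j hv.2

end IsGrid

theorem isGrid_of_rows {a₁ a₂ a₃ b₁ b₂ b₃ c₁ c₂ c₃ : V}
    (hA : G.IsNClique 3 {a₁, a₂, a₃}) (hB : G.IsNClique 3 {b₁, b₂, b₃})
    (hC : G.IsNClique 3 {c₁, c₂, c₃})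
    (hAB : Disjoint ({a₁, a₂, a₃} : Finset V) {b₁, b₂, b₃})
    (hAC : Disjoint ({a₁, a₂, a₃} : Finset V) {c₁, c₂, c₃})
    (hBC : Disjoint ({b₁, b₂, b₃} : Finset V) {c₁, c₂, c₃})
    (hab₁ : G.Adj a₁ b₁) (hab₂ : G.Adj a₂ b₂) (hab₃ : G.Adj a₃ b₃)
    (hac₁ : G.Adj a₁ c₁) (hac₂ : G.Adj a₂ c₂) (hac₃ : G.Adj a₃ c₃)
    (hbc₁ : G.Adj b₁ c₁) (hbc₂ : G.Adj b₂ c₂) (hbc₃ : G.Adj b₃ c₃) :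
    IsGrid G ![![a₁, a₂, a₃], ![b₁, b₂, b₃], ![c₁, c₂, c₃]] := by
  obtain ⟨ha₁₂, ha₁₃, ha₂₃⟩ := is3Clique_triple_iff.1 hA
  obtain ⟨hb₁₂, hb₁₃, hb₂₃⟩ := is3Clique_triple_iff.1 hB
  obtain ⟨hc₁₂, hc₁₃, hc₂₃⟩ := is3Clique_triple_iff.1 hC
  set M := ![![a₁, a₂, a₃], ![b₁, b₂, b₃], ![c₁, c₂, c₃]] with hM
  have hrow : ∀ i {j j' : Fin 3}, j ≠ j' → G.Adj (M i j) (M i j') := by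
    intro i j j' h
    fin_cases i <;> fin_cases j <;> fin_cases j' <;>
      simp [hM, ha₁₂, ha₁₃, ha₂₃, hb₁₂, hb₁₃, hb₂₃, hc₁₂, hc₁₃, hc₂₃, ha₁₂.symm, ha₁₃.symm,
        ha₂₃.symm, hb₁₂.symm, hb₁₃.symm, hb₂₃.symm, hc₁₂.symm, hc₁₃.symm, hc₂₃.symm] at h ⊢
  refine ⟨?_, hrow, ?_⟩
  · let R : Fin 3 → Finset V := ![{a₁, a₂, a₃}, {b₁, b₂, b₃}, {c₁, c₂, c₃}]
    have hR : ∀ i j, M i j ∈ R i := by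
      intro i j
      fin_cases i <;> fin_cases j <;> simp [hM, R]
    have hRd : ∀ {i i'}, i ≠ i' → Disjoint (R i) (R i') := by
      intro i i' h
      fin_cases i <;> fin_cases i' <;> simp_all [R, disjoint_comm]
    rintro ⟨i, j⟩ ⟨i', j'⟩ h
    rw [Function.uncurry_apply_pair, Function.uncurry_apply_pair] at h
    obtain rfl : i = i' := by_contra fun hi => disjoint_left.1 (hRd hi) (hR i j) (h ▸ hR i' j')
    obtain rfl : j = j' := by_contra fun hj => (hrow i hj).ne h
    rfl
  · intro i i' j h
    fin_cases i <;> fin_cases i' <;> fin_cases j <;>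
      simp [hM, hab₁, hab₂, hab₃, hac₁, hac₂, hac₃, hbc₁, hbc₂, hbc₃, hab₁.symm, hab₂.symm,
        hab₃.symm, hac₁.symm, hac₂.symm, hac₃.symm, hbc₁.symm, hbc₂.symm, hbc₃.symm] at h ⊢

theorem exists_isGrid_of_claw (hG : Prismatic G) (hor : Orientable G) {T S₁ S₂ S₃ : Finset V}
    (hT : G.IsNClique 3 T) (hS₁ : G.IsNClique 3 S₁) (hS₂ : G.IsNClique 3 S₂)
    (hS₃ : G.IsNClique 3 S₃) (h₁ : (S₁ ∩ T).Nonempty) (h₂ : (S₂ ∩ T).Nonempty)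
    (h₃ : (S₃ ∩ T).Nonempty) (h₁₂ : Disjoint S₁ S₂) (h₁₃ : Disjoint S₁ S₃)
    (h₂₃ : Disjoint S₂ S₃) : ∃ g, IsGrid G g ∧ gridCol g 0 = T := by
  obtain ⟨m₁, hm₁⟩ := h₁
  obtain ⟨m₂, hm₂⟩ := h₂
  obtain ⟨m₃, hm₃⟩ := h₃
  rw [mem_inter] at hm₁ hm₂ hm₃
  have hT' : {m₁, m₂, m₃} = T := by
    refine eq_of_subset_of_card_le (by simp [insert_subset_iff, hm₁.2, hm₂.2, hm₃.2]) ?_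
    rw [hT.card_eq, card_eq_three.2 ⟨m₁, m₂, m₃, disjoint_iff_ne.1 h₁₂ _ hm₁.1 _ hm₂.1,
      disjoint_iff_ne.1 h₁₃ _ hm₁.1 _ hm₃.1, disjoint_iff_ne.1 h₂₃ _ hm₂.1 _ hm₃.1, rfl⟩]
  subst hT'
  obtain ⟨hm₁₂, hm₁₃, hm₂₃⟩ := is3Clique_triple_iff.1 hT
  obtain ⟨x₁, y₁, rfl⟩ := exists_eq_insert_pair_of_card_eq_three hS₁.card_eq hm₁.1
  obtain ⟨x₂, y₂, rfl, hx₂, hy₂⟩ := hG.exists_matching hS₁ hS₂ h₁₂ hm₂.1 hm₁₂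
  obtain ⟨x₃, y₃, rfl, hx₃, hy₃⟩ := hG.exists_matching hS₁ hS₃ h₁₃ hm₃.1 hm₁₃
  have hx₂₃ := hor.adj_of_matchings hG hS₁ hS₂ hS₃ h₁₂ h₁₃ h₂₃ hm₁₂ hx₂ hy₂ hm₁₃ hx₃ hy₃ hm₂₃
  refine ⟨_, isGrid_of_rows hS₁ hS₂ hS₃ h₁₂ h₁₃ h₂₃ hm₁₂ hx₂ hy₂ hm₁₃ hx₃ hy₃ hm₂₃ hx₂₃
    (hG.adj_of_adj_of_adj hS₂ hS₃ h₂₃ hm₂₃ hx₂₃), ?_⟩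
  simp [gridCol_eq]

theorem exists_isGrid_of_claw_embedding (hG : Prismatic G) (hor : Orientable G)
    {s : Set {T : Finset V // G.IsNClique 3 T}} (e : Claw ↪g (DerivedGraph G).induce s) :
    ∃ g, ∃ hg : IsGrid G g, hg.triangle (.inr 0) = (e 0).1 := by
  have hmeet : ∀ k : Fin 4, k ≠ 0 → ((e k).1.1 ∩ (e 0).1.1).Nonempty := fun k hk => by
    rw [inter_comm]
    exact (e.map_adj_iff.2 (Or.inl ⟨rfl, hk⟩)).2
  have hdisj : ∀ k l : Fin 4, k ≠ 0 → l ≠ 0 → k ≠ l → Disjoint (e k).1.1 (e l).1.1 := by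
    intro k l hk hl hkl
    by_contra hkl'
    rw [not_disjoint_iff_nonempty_inter] at hkl'
    rcases e.map_adj_iff.1 ⟨fun h => hkl (e.injective (Subtype.ext h)), hkl'⟩ with ⟨h, -⟩ | ⟨h, -⟩
    exacts [hk h, hl h]
  obtain ⟨g, hg, hT⟩ := exists_isGrid_of_claw hG hor (e 0).1.2 (e 1).1.2 (e 2).1.2 (e 3).1.2
    (hmeet 1 (by decide)) (hmeet 2 (by decide)) (hmeet 3 (by decide))
    (hdisj 1 2 (by decide) (by decide) (by decide)) (hdisj 1 3 (by decide) (by decide) (by decide))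
    (hdisj 2 3 (by decide) (by decide) (by decide))
  exact ⟨g, hg, Subtype.ext hT⟩

end

theorem derived_graph_components_clawfree_or_K33_general {V : Type*} [DecidableEq V]
    (G : SimpleGraph V) (hG : Prismatic G) (hor : Orientable G) :
    ∀ C : (DerivedGraph G).ConnectedComponent,
      (¬ Nonempty (Claw ↪g ((DerivedGraph G).induce C.supp))) ∨
      Nonempty (((DerivedGraph G).induce C.supp) ≃g
        completeBipartiteGraph (Fin 3) (Fin 3)) := by
  intro C
  refine or_iff_not_imp_left.2 fun hclaw => ?_
  obtain ⟨e⟩ := not_not.1 hclaw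
  obtain ⟨g, hg, he⟩ := exists_isGrid_of_claw_embedding hG hor e
  refine C.nonempty_induce_supp_iso completeBipartiteGraph_preconnected hg.derivedGraphEmbedding
    (fun _ _ h => hg.mem_range_triangle_of_adj hG hor h) (w := .inr 0) ?_
  change hg.triangle (.inr 0) ∈ C.supp
  exact he ▸ (e 0).2

/-- For an orientable prismatic graph G, every connected component of the derived graph
D(G) is claw-free or isomorphic to K_{3,3}. -/
theorem derived_graph_components_clawfree_or_K33 {V : Type*} [Fintype V] [DecidableEq V]
    (G : SimpleGraph V) (hG : Prismatic G) (hor : Orientable G) :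
    ∀ C : (DerivedGraph G).ConnectedComponent,
      (¬ Nonempty (Claw ↪g ((DerivedGraph G).induce C.supp))) ∨
      Nonempty (((DerivedGraph G).induce C.supp) ≃g
        completeBipartiteGraph (Fin 3) (Fin 3)) :=
  derived_graph_components_clawfree_or_K33_general G hG hor
end

section
/- Every prismatic graph G admits a minimum clique cover (a partition of V(G) into cliques with as few parts as possible) in which either no part is a singleton, or no part has three or more vertices; that is, some minimum clique cover consists only of triangles and edges, or consists only of edges and single vertices. -/
/-- A clique cover of G: a collection of nonempty cliques such that every vertex lies
in exactly one of them. -/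
def IsCliqueCover {V : Type*} (G : SimpleGraph V) (𝒞 : Finset (Finset V)) : Prop :=
  (∀ K ∈ 𝒞, G.IsClique (K : Set V)) ∧ (∀ K ∈ 𝒞, K.Nonempty) ∧
    (∀ v : V, ∃! K, K ∈ 𝒞 ∧ v ∈ K)

/-- In a prismatic graph every clique has at most 3 vertices. -/
lemma prismatic_clique_card_le {V : Type*} [DecidableEq V] {G : SimpleGraph V}
    (hG : Prismatic G) {K : Finset V} (hK : G.IsClique (K : Set V)) : K.card ≤ 3 := by
  by_contra h
  push_neg at h
  obtain ⟨a, ha⟩ := Finset.card_pos.mp (show 0 < K.card by omega)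
  obtain ⟨b, hb⟩ := Finset.card_pos.mp (show 0 < (K.erase a).card by
    rw [Finset.card_erase_of_mem ha]; omega)
  obtain ⟨c, hc⟩ := Finset.card_pos.mp (show 0 < ((K.erase a).erase b).card by
    rw [Finset.card_erase_of_mem hb, Finset.card_erase_of_mem ha]; omega)
  obtain ⟨d, hd⟩ := Finset.card_pos.mp (show 0 < (((K.erase a).erase b).erase c).card by
    rw [Finset.card_erase_of_mem hc, Finset.card_erase_of_mem hb,
      Finset.card_erase_of_mem ha]; omega)
  simp only [Finset.mem_erase] at hb hc hd
  have hab : G.Adj a b := hK (Finset.mem_coe.mpr ha) (Finset.mem_coe.mpr hb.2) (Ne.symm hb.1)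
  have hac : G.Adj a c := hK (Finset.mem_coe.mpr ha) (Finset.mem_coe.mpr hc.2.2) (Ne.symm hc.2.1)
  have hbc : G.Adj b c := hK (Finset.mem_coe.mpr hb.2) (Finset.mem_coe.mpr hc.2.2) (Ne.symm hc.1)
  have hda : G.Adj d a := hK (Finset.mem_coe.mpr hd.2.2.2) (Finset.mem_coe.mpr ha) hd.2.2.1
  have hdb : G.Adj d b := hK (Finset.mem_coe.mpr hd.2.2.2) (Finset.mem_coe.mpr hb.2) hd.2.1
  obtain ⟨u, -, huniq⟩ := hG a b c d hab hac hbc hd.2.2.1 hd.2.1 hd.1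
  have h1 := huniq a ⟨by simp, hda⟩
  have h2 := huniq b ⟨by simp, hdb⟩
  exact hb.1 (h2.trans h1.symm)

lemma prismatic_cover_aux {V : Type*} [Fintype V] [DecidableEq V]
    (G : SimpleGraph V) (hG : Prismatic G) :
    ∀ n (𝒞 : Finset (Finset V)), IsCliqueCover G 𝒞 →
      (∀ 𝒟, IsCliqueCover G 𝒟 → 𝒞.card ≤ 𝒟.card) →
      (𝒞.filter (fun K => K.card = 1)).card ≤ n →
      ∃ 𝒞', IsCliqueCover G 𝒞' ∧ (∀ 𝒟, IsCliqueCover G 𝒟 → 𝒞'.card ≤ 𝒟.card) ∧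
        ((∀ K ∈ 𝒞', 2 ≤ K.card) ∨ (∀ K ∈ 𝒞', K.card ≤ 2)) := by
  intro n
  induction n with
  | zero =>
    intro 𝒞 hc hmin hcnt
    refine ⟨𝒞, hc, hmin, Or.inl ?_⟩
    intro K hK
    have h1 : K.card ≠ 1 := by
      intro h
      have hmem : K ∈ 𝒞.filter (fun K => K.card = 1) := Finset.mem_filter.mpr ⟨hK, h⟩
      have := Finset.card_pos.mpr ⟨K, hmem⟩
      omega
    have := Finset.card_pos.mpr (hc.2.1 K hK)
    omega
  | succ n ih =>
    intro 𝒞 hc hmin hcnt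
    by_cases hs : ∃ S ∈ 𝒞, S.card = 1
    · by_cases ht : ∃ T ∈ 𝒞, 3 ≤ T.card
      · -- swap a singleton part and a triangle part into two edge parts
        obtain ⟨S, hS𝒞, hScard⟩ := hs
        obtain ⟨v, rfl⟩ := Finset.card_eq_one.mp hScard
        obtain ⟨T, hT𝒞, hTcard3⟩ := ht
        have hTclq := hc.1 T hT𝒞
        have hTcard : T.card = 3 :=
          le_antisymm (prismatic_clique_card_le hG hTclq) hTcard3
        obtain ⟨a, b, c, hab, hac, hbc, rfl⟩ := Finset.card_eq_three.mp hTcard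
        have huniq_part : ∀ w (K₁ K₂ : Finset V), K₁ ∈ 𝒞 → K₂ ∈ 𝒞 → w ∈ K₁ → w ∈ K₂ →
            K₁ = K₂ := by
          intro w K₁ K₂ h1 h2 hw1 hw2
          obtain ⟨P, -, hPu⟩ := hc.2.2 w
          rw [hPu K₁ ⟨h1, hw1⟩, hPu K₂ ⟨h2, hw2⟩]
        have hST : ({v} : Finset V) ≠ ({a, b, c} : Finset V) := by
          intro h
          rw [h] at hScard
          omega
        have hvT : v ∉ ({a, b, c} : Finset V) := by
          intro hv
          exact hST (huniq_part v {v} {a, b, c} hS𝒞 hT𝒞 (by simp) hv)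
        have hv3 : v ≠ a ∧ v ≠ b ∧ v ≠ c := by
          simp only [Finset.mem_insert, Finset.mem_singleton] at hvT
          tauto
        have hAab : G.Adj a b := hTclq (by simp) (by simp) hab
        have hAac : G.Adj a c := hTclq (by simp) (by simp) hac
        have hAbc : G.Adj b c := hTclq (by simp) (by simp) hbc
        obtain ⟨u, ⟨huT, hadj⟩, -⟩ := hG a b c v hAab hAac hAbc hv3.1 hv3.2.1 hv3.2.2
        have huT' : u ∈ ({a, b, c} : Finset V) := by
          simp only [Set.mem_insert_iff, Set.mem_singleton_iff] at huT
          simp only [Finset.mem_insert, Finset.mem_singleton]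
          tauto
        have hvu : v ≠ u := fun h => hvT (h ▸ huT')
        set rest : Finset (Finset V) := (𝒞.erase {v}).erase {a, b, c} with hrestdef
        set E : Finset V := ({a, b, c} : Finset V).erase u with hEdef
        set 𝒞' : Finset (Finset V) := insert {v, u} (insert E rest) with hC'def
        have hrest : ∀ K ∈ rest, K ∈ 𝒞 ∧ K ≠ {v} ∧ K ≠ ({a, b, c} : Finset V) := by
          intro K hK
          simp only [hrestdef, Finset.mem_erase] at hK
          tauto
        have hvnotrest : ∀ K ∈ rest, v ∉ K := by
          intro K hK hv
          exact (hrest K hK).2.1 (huniq_part v K {v} (hrest K hK).1 hS𝒞 hv (by simp))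
        have hTnotrest : ∀ K ∈ rest, ∀ w ∈ ({a, b, c} : Finset V), w ∉ K := by
          intro K hK w hw hwK
          exact (hrest K hK).2.2 (huniq_part w K {a, b, c} (hrest K hK).1 hT𝒞 hwK hw)
        have hEcard : E.card = 2 := by
          rw [hEdef, Finset.card_erase_of_mem huT', hTcard]
        have hVUcard : ({v, u} : Finset V).card = 2 := by
          rw [Finset.card_insert_of_notMem (by simp [hvu]), Finset.card_singleton]
        have hvE : v ∉ E := fun h => hvT (Finset.mem_of_mem_erase h)
        have hVUneE : ({v, u} : Finset V) ≠ E := by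
          intro h
          exact hvE (h ▸ (by simp : v ∈ ({v, u} : Finset V)))
        have hVUnotrest : ({v, u} : Finset V) ∉ rest := by
          intro h
          exact hvnotrest _ h (by simp)
        have hEnotrest : E ∉ rest := by
          intro h
          obtain ⟨w, hw⟩ := Finset.card_pos.mp (show 0 < E.card by omega)
          exact hTnotrest _ h w (Finset.mem_of_mem_erase hw) hw
        have hmemC' : ∀ K, K ∈ 𝒞' ↔ K = {v, u} ∨ K = E ∨ K ∈ rest := by
          intro K
          simp [hC'def, Finset.mem_insert]
        -- cardinality
        have hr1 : (𝒞.erase {v}).card + 1 = 𝒞.card := Finset.card_erase_add_one hS𝒞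
        have hr2 : rest.card + 1 = (𝒞.erase {v}).card :=
          Finset.card_erase_add_one (Finset.mem_erase.mpr ⟨hST.symm, hT𝒞⟩)
        have hcardC' : 𝒞'.card = 𝒞.card := by
          rw [hC'def, Finset.card_insert_of_notMem, Finset.card_insert_of_notMem hEnotrest]
          · omega
          · simp only [Finset.mem_insert]
            push_neg
            exact ⟨hVUneE, hVUnotrest⟩
        -- the new cover
        have hc' : IsCliqueCover G 𝒞' := by
          refine ⟨?_, ?_, ?_⟩
          · intro K hK
            rcases (hmemC' K).mp hK with rfl | rfl | hK
            · intro x hx y hy hxy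
              simp only [Finset.coe_insert, Set.mem_insert_iff, Finset.coe_singleton,
                Set.mem_singleton_iff] at hx hy
              rcases hx with rfl | rfl <;> rcases hy with rfl | rfl
              · exact absurd rfl hxy
              · exact hadj
              · exact hadj.symm
              · exact absurd rfl hxy
            · exact hTclq.subset (Finset.coe_subset.mpr (Finset.erase_subset _ _))
            · exact hc.1 K (hrest K hK).1
          · intro K hK
            rcases (hmemC' K).mp hK with rfl | rfl | hK
            · exact ⟨v, by simp⟩
            · exact Finset.card_pos.mp (by omega)
            · exact hc.2.1 K (hrest K hK).1
          · intro w
            by_cases hwv : w = v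
            · subst hwv
              refine ⟨{w, u}, ⟨(hmemC' _).mpr (Or.inl rfl), by simp⟩, ?_⟩
              rintro K ⟨hK, hwK⟩
              rcases (hmemC' K).mp hK with rfl | rfl | hK
              · rfl
              · exact absurd hwK hvE
              · exact absurd hwK (hvnotrest K hK)
            · by_cases hwT : w ∈ ({a, b, c} : Finset V)
              · by_cases hwu : w = u
                · subst hwu
                  refine ⟨{v, w}, ⟨(hmemC' _).mpr (Or.inl rfl), by simp⟩, ?_⟩
                  rintro K ⟨hK, hwK⟩
                  rcases (hmemC' K).mp hK with rfl | rfl | hK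
                  · rfl
                  · exact absurd hwK (Finset.notMem_erase w _)
                  · exact absurd hwK (hTnotrest K hK w hwT)
                · refine ⟨E, ⟨(hmemC' _).mpr (Or.inr (Or.inl rfl)),
                    Finset.mem_erase.mpr ⟨hwu, hwT⟩⟩, ?_⟩
                  rintro K ⟨hK, hwK⟩
                  rcases (hmemC' K).mp hK with rfl | rfl | hK
                  · simp only [Finset.mem_insert, Finset.mem_singleton] at hwK
                    rcases hwK with rfl | rfl
                    · exact absurd rfl hwv
                    · exact absurd rfl hwu
                  · rfl
                  · exact absurd hwK (hTnotrest K hK w hwT)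
              · obtain ⟨P, ⟨hP𝒞, hwP⟩, -⟩ := hc.2.2 w
                have hP1 : P ≠ {v} := by
                  intro h
                  rw [h, Finset.mem_singleton] at hwP
                  exact hwv hwP
                have hP2 : P ≠ ({a, b, c} : Finset V) := fun h => hwT (h ▸ hwP)
                have hPrest : P ∈ rest :=
                  Finset.mem_erase.mpr ⟨hP2, Finset.mem_erase.mpr ⟨hP1, hP𝒞⟩⟩
                refine ⟨P, ⟨(hmemC' _).mpr (Or.inr (Or.inr hPrest)), hwP⟩, ?_⟩
                rintro K ⟨hK, hwK⟩
                rcases (hmemC' K).mp hK with rfl | rfl | hK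
                · simp only [Finset.mem_insert, Finset.mem_singleton] at hwK
                  rcases hwK with rfl | rfl
                  · exact absurd rfl hwv
                  · exact absurd huT' hwT
                · exact absurd (Finset.mem_of_mem_erase hwK) hwT
                · exact huniq_part w K P (hrest K hK).1 hP𝒞 hwK hwP
        have hmin' : ∀ 𝒟, IsCliqueCover G 𝒟 → 𝒞'.card ≤ 𝒟.card := by
          intro 𝒟 h𝒟
          rw [hcardC']
          exact hmin 𝒟 h𝒟
        -- singleton count decreases
        have hsub : 𝒞'.filter (fun K => K.card = 1) ⊆
            (𝒞.filter (fun K => K.card = 1)).erase {v} := by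
          intro K hK
          rw [Finset.mem_filter] at hK
          rcases (hmemC' K).mp hK.1 with rfl | rfl | hKr
          · omega
          · omega
          · exact Finset.mem_erase.mpr ⟨(hrest K hKr).2.1,
              Finset.mem_filter.mpr ⟨(hrest K hKr).1, hK.2⟩⟩
        have hvfilter : ({v} : Finset V) ∈ 𝒞.filter (fun K => K.card = 1) :=
          Finset.mem_filter.mpr ⟨hS𝒞, by simp⟩
        have he1 := Finset.card_erase_add_one hvfilter
        have he2 := Finset.card_le_card hsub
        exact ih 𝒞' hc' hmin' (by omega)
      · push_neg at ht
        exact ⟨𝒞, hc, hmin, Or.inr (fun K hK => by have := ht K hK; omega)⟩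
    · push_neg at hs
      refine ⟨𝒞, hc, hmin, Or.inl ?_⟩
      intro K hK
      have := Finset.card_pos.mpr (hc.2.1 K hK)
      have := hs K hK
      omega

/-- Every prismatic graph admits a minimum clique cover in which either no part is a
singleton, or no part has three or more vertices. -/
theorem prismatic_minimum_clique_cover_structure {V : Type*} [Fintype V] [DecidableEq V]
    (G : SimpleGraph V) (hG : Prismatic G) :
    ∃ 𝒞 : Finset (Finset V), IsCliqueCover G 𝒞 ∧
      (∀ 𝒟 : Finset (Finset V), IsCliqueCover G 𝒟 → 𝒞.card ≤ 𝒟.card) ∧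
      ((∀ K ∈ 𝒞, 2 ≤ K.card) ∨ (∀ K ∈ 𝒞, K.card ≤ 2)) := by
  classical
  have hex : ∃ n, ∃ 𝒟 : Finset (Finset V), IsCliqueCover G 𝒟 ∧ 𝒟.card = n := by
    refine ⟨_, Finset.univ.image (fun v => ({v} : Finset V)), ⟨?_, ?_, ?_⟩, rfl⟩
    · intro K hK
      obtain ⟨w, -, rfl⟩ := Finset.mem_image.mp hK
      intro x hx y hy hxy
      simp only [Finset.coe_singleton, Set.mem_singleton_iff] at hx hy
      exact absurd (hx.trans hy.symm) hxy
    · intro K hK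
      obtain ⟨w, -, rfl⟩ := Finset.mem_image.mp hK
      exact ⟨w, by simp⟩
    · intro w
      refine ⟨{w}, ⟨Finset.mem_image_of_mem _ (Finset.mem_univ w), by simp⟩, ?_⟩
      rintro K ⟨hK, hwK⟩
      obtain ⟨x, -, rfl⟩ := Finset.mem_image.mp hK
      rw [Finset.mem_singleton] at hwK
      rw [hwK]
  obtain ⟨𝒞, hc, hcard⟩ := Nat.find_spec hex
  have hmin : ∀ 𝒟, IsCliqueCover G 𝒟 → 𝒞.card ≤ 𝒟.card := by
    intro 𝒟 h𝒟
    rw [hcard]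
    exact Nat.find_le ⟨𝒟, h𝒟, rfl⟩
  exact prismatic_cover_aux G hG (𝒞.filter (fun K => K.card = 1)).card 𝒞 hc hmin le_rfl
end
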